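/- arXiv:2601.13025 — 3 statements merged into one kernel-verified Lean document; each statement's English description precedes it below -/
import Mathlib

section
/- Let Γ = γ^a v_a as above and let N ≥ 2. Then for each basis vector v_b (acting by contraction [v_b, ·] on the Λ•V factor, extended as a graded derivation): [v_b, Γ^N] = N [v_b, Γ] Γ^{N-1} + N(N-1) v_b Γ^{N-2}, where [v_b, Γ] = η_{ba} γ^a · 1 (the contraction of v_b with the vector part of Γ) and Γ^N denotes the N-th power in C(V) ⊗ Λ•V. -/
noncomputable section

open scoped TensorProduct

/-- The Minkowski metric `η = diag(-1,1,1,1)` on `V = ℝ⁴` (it equals its own inverse). -/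
def mink (a b : Fin 4) : ℝ := if a = b then (if a = 0 then -1 else 1) else 0

/-- The exterior algebra `Λ•V` of `V = ℝ⁴`. -/
abbrev ExtV : Type := ExteriorAlgebra ℝ (Fin 4 → ℝ)

/-- The basis vector `v_a` of `V = ℝ⁴`. -/
def vb (a : Fin 4) : Fin 4 → ℝ := Pi.single a 1

/-- `Γ := γ^a ⊗ v_a ∈ C(V) ⊗ Λ•V`, with `γ^a = η^{ab} γ_b`. -/
def Gam {A : Type*} [Ring A] [Algebra ℝ A] (γ : Fin 4 → A) : A ⊗[ℝ] ExtV :=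
  ∑ a : Fin 4, (∑ b : Fin 4, mink a b • γ b) ⊗ₜ[ℝ] (ExteriorAlgebra.ι ℝ (vb a))

/-- The dual vector `η(v_b, ·)`. -/
def dualb (b : Fin 4) : Module.Dual ℝ (Fin 4 → ℝ) :=
  ∑ a : Fin 4, mink b a • LinearMap.proj a

/-- The contraction `[v_b, ·] := id_{C(V)} ⊗ (η(v_b,·) ⌋ ·)`, i.e. contraction with `v_b`
via `η` acting as an odd derivation on the `Λ•V` factor of `C(V) ⊗ Λ•V`. -/
def contrb (A : Type*) [Ring A] [Algebra ℝ A] (b : Fin 4) :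
    A ⊗[ℝ] ExtV →ₗ[ℝ] A ⊗[ℝ] ExtV :=
  LinearMap.lTensor A
    (CliffordAlgebra.contractLeft (Q := (0 : QuadraticForm ℝ (Fin 4 → ℝ))) (dualb b))

/-!
On `C(V) ⊗ Λ•V` the contraction `D = [v_b, ·]` satisfies the twisted Leibniz rule
`D (Γ x) = (γ_b ⊗ 1) x - Γ D x`, since `Γ` is odd in the exterior factor. Pushing `γ_b ⊗ 1`
through `Γ` costs the Clifford relation `Γ (γ_b ⊗ 1) + (γ_b ⊗ 1) Γ = -2 (1 ⊗ v_b)`, and `1 ⊗ v_b`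
anticommutes with `Γ`; an induction on `N` then produces the coefficients `N` and `N (N - 1)`.
-/

section TwistedDerivation

variable {R : Type*} [Ring R]

theorem apply_pow_add_two_of_apply_mul (D : R → R) {g c e : R}
    (hD : ∀ x, D (g * x) = c * x - g * D x) (hg : D g = c)
    (hgc : g * c + c * g = -(2 • e)) (hge : g * e = -(e * g)) (n : ℕ) :
    D (g ^ (n + 2)) = (n + 2) • (c * g ^ (n + 1)) + ((n + 2) * (n + 1)) • (e * g ^ n) := by
  have hgc' : ∀ x, g * (c * x) = -(2 • (e * x)) - c * (g * x) := fun x => by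
    rw [← mul_assoc, ← mul_assoc, eq_sub_of_add_eq hgc, sub_mul, neg_mul, smul_mul_assoc]
  have hge' : ∀ x, g * (e * x) = -(e * (g * x)) := fun x => by
    rw [← mul_assoc, ← mul_assoc, hge, neg_mul]
  induction n with
  | zero =>
    rw [pow_two, hD, hg, eq_sub_of_add_eq hgc, pow_one, pow_zero, mul_one]
    module
  | succ n ih =>
    rw [pow_succ' g (n + 2), hD, ih, mul_add, mul_smul_comm, mul_smul_comm, hgc', hge',
      ← pow_succ', ← pow_succ']
    module

end TwistedDerivation

section ContractLeft

variable {R M A : Type*} [CommRing R] [AddCommGroup M] [Module R M] [Ring A] [Algebra R A]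

theorem lTensor_contractLeft_tmul_ι_mul (f : Module.Dual R M) (u : A) (m : M)
    (x : A ⊗[R] ExteriorAlgebra R M) :
    LinearMap.lTensor A (CliffordAlgebra.contractLeft (Q := 0) f)
        ((u ⊗ₜ[R] ExteriorAlgebra.ι R m) * x)
      = f m • ((u ⊗ₜ[R] 1) * x)
        - (u ⊗ₜ[R] ExteriorAlgebra.ι R m)
          * LinearMap.lTensor A (CliffordAlgebra.contractLeft (Q := 0) f) x := by
  induction x using TensorProduct.induction_on with
  | zero => simp only [mul_zero, map_zero, smul_zero, sub_zero]
  | tmul y z =>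
    simp only [Algebra.TensorProduct.tmul_mul_tmul, LinearMap.lTensor_tmul,
      CliffordAlgebra.contractLeft_ι_mul, one_mul, TensorProduct.tmul_sub,
      TensorProduct.tmul_smul, TensorProduct.smul_tmul']
  | add x y hx hy =>
    simp only [mul_add, map_add, hx, hy, smul_add]
    abel

theorem tmul_ι_mul_one_tmul_ι (u : A) (m m' : M) :
    (u ⊗ₜ[R] ExteriorAlgebra.ι R m) * ((1 : A) ⊗ₜ[R] ExteriorAlgebra.ι R m')
      = -(((1 : A) ⊗ₜ[R] ExteriorAlgebra.ι R m') * (u ⊗ₜ[R] ExteriorAlgebra.ι R m)) := by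
  rw [Algebra.TensorProduct.tmul_mul_tmul, Algebra.TensorProduct.tmul_mul_tmul, one_mul,
    mul_one, ← TensorProduct.tmul_neg,
    eq_neg_of_add_eq_zero_left (ExteriorAlgebra.ι_add_mul_swap _ _)]

end ContractLeft

theorem sum_mink_smul_sum_mink_smul {M : Type*} [AddCommGroup M] [Module ℝ M]
    (v : Fin 4 → M) (b : Fin 4) :
    ∑ a : Fin 4, mink b a • ∑ c : Fin 4, mink a c • v c = v b := by
  fin_cases b <;> simp [mink, Fin.sum_univ_four]

theorem sum_mink_mul_mink (a b : Fin 4) :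
    ∑ c : Fin 4, mink a c * mink c b = if a = b then 1 else 0 := by
  fin_cases a <;> fin_cases b <;> simp [mink]

theorem dualb_vb (a b : Fin 4) : dualb b (vb a) = mink b a := by
  fin_cases a <;> fin_cases b <;> simp [dualb, vb, mink]

section Gamma

variable {A : Type*} [Ring A] [Algebra ℝ A] (γ : Fin 4 → A)

def gammaUp (a : Fin 4) : A := ∑ c : Fin 4, mink a c • γ c

theorem Gam_eq_sum_gammaUp :
    Gam γ = ∑ a : Fin 4, gammaUp γ a ⊗ₜ[ℝ] ExteriorAlgebra.ι ℝ (vb a) := rfl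

theorem contrb_one (b : Fin 4) : contrb A b 1 = 0 := by
  rw [Algebra.TensorProduct.one_def, contrb, LinearMap.lTensor_tmul,
    CliffordAlgebra.contractLeft_one, TensorProduct.tmul_zero]

theorem contrb_Gam_mul (b : Fin 4) (x : A ⊗[ℝ] ExtV) :
    contrb A b (Gam γ * x) = (γ b ⊗ₜ[ℝ] 1) * x - Gam γ * contrb A b x := by
  rw [Gam_eq_sum_gammaUp, Finset.sum_mul, map_sum, Finset.sum_mul]
  simp only [contrb, lTensor_contractLeft_tmul_ι_mul, dualb_vb, Finset.sum_sub_distrib]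
  congr 1
  rw [← sum_mink_smul_sum_mink_smul γ b, TensorProduct.sum_tmul, Finset.sum_mul]
  refine Finset.sum_congr rfl fun a _ => ?_
  rw [← smul_mul_assoc, TensorProduct.smul_tmul', gammaUp]

theorem contrb_Gam (b : Fin 4) : contrb A b (Gam γ) = γ b ⊗ₜ[ℝ] 1 := by
  simpa only [mul_one, contrb_one, mul_zero, sub_zero] using contrb_Gam_mul γ b 1

theorem Gam_mul_one_tmul_ι (m : Fin 4 → ℝ) :
    Gam γ * ((1 : A) ⊗ₜ[ℝ] ExteriorAlgebra.ι ℝ m)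
      = -(((1 : A) ⊗ₜ[ℝ] ExteriorAlgebra.ι ℝ m) * Gam γ) := by
  simp only [Gam, Finset.sum_mul, Finset.mul_sum, tmul_ι_mul_one_tmul_ι, Finset.sum_neg_distrib]

variable {γ}

theorem gammaUp_anticomm
    (hcl : ∀ a b : Fin 4, γ a * γ b + γ b * γ a = (-2 * mink a b) • (1 : A)) (a b : Fin 4) :
    gammaUp γ a * γ b + γ b * gammaUp γ a = (-2 * if a = b then 1 else 0 : ℝ) • (1 : A) := by
  simp only [gammaUp, Finset.mul_sum, Finset.sum_mul, ← Finset.sum_add_distrib, mul_smul_comm,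
    smul_mul_assoc, ← smul_add, hcl, smul_smul, ← Finset.sum_smul]
  rw [← sum_mink_mul_mink, Finset.mul_sum]
  exact congrArg (· • (1 : A)) (Finset.sum_congr rfl fun c _ => by ring)

theorem Gam_anticomm_tmul_one
    (hcl : ∀ a b : Fin 4, γ a * γ b + γ b * γ a = (-2 * mink a b) • (1 : A)) (b : Fin 4) :
    Gam γ * (γ b ⊗ₜ[ℝ] 1) + (γ b ⊗ₜ[ℝ] 1) * Gam γ
      = -(2 • ((1 : A) ⊗ₜ[ℝ] ExteriorAlgebra.ι ℝ (vb b))) := by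
  simp only [Gam_eq_sum_gammaUp, Finset.sum_mul, Finset.mul_sum, ← Finset.sum_add_distrib,
    Algebra.TensorProduct.tmul_mul_tmul, mul_one, one_mul, ← TensorProduct.add_tmul,
    gammaUp_anticomm hcl, ← TensorProduct.smul_tmul']
  simp only [mul_ite, mul_one, mul_zero, ite_smul, zero_smul, Finset.sum_ite_eq',
    Finset.mem_univ, if_true]
  module

end Gamma

/-- Let `Γ = γ^a ⊗ v_a ∈ C(V) ⊗ Λ•V` and `N ≥ 2`.  Then for each basis
vector `v_b` (acting by contraction on the `Λ•V` factor, extended as a graded derivation):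
`[v_b, Γ^N] = N [v_b, Γ] Γ^{N-1} + N(N-1) v_b Γ^{N-2}`,
where `[v_b, Γ] = η_{ba} γ^a ⊗ 1` and powers are taken in `C(V) ⊗ Λ•V`. -/
theorem contraction_gamma_power {A : Type*} [Ring A] [Algebra ℝ A]
    (γ : Fin 4 → A)
    (hcl : ∀ a b : Fin 4, γ a * γ b + γ b * γ a = (-2 * mink a b) • (1 : A))
    (b : Fin 4) (N : ℕ) (hN : 2 ≤ N) :
    contrb A b (Gam γ ^ N)
      = (N : ℝ) • (contrb A b (Gam γ) * Gam γ ^ (N - 1))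
        + ((N : ℝ) * ((N : ℝ) - 1)) •
            (((1 : A) ⊗ₜ[ℝ] ExteriorAlgebra.ι ℝ (vb b)) * Gam γ ^ (N - 2))
    ∧ contrb A b (Gam γ)
        = (∑ a : Fin 4, mink b a • (∑ c : Fin 4, mink a c • γ c)) ⊗ₜ[ℝ] (1 : ExtV) := by
  obtain ⟨n, rfl⟩ : ∃ n, N = n + 2 := ⟨N - 2, by omega⟩
  refine ⟨?_, by rw [contrb_Gam, sum_mink_smul_sum_mink_smul]⟩
  rw [contrb_Gam, apply_pow_add_two_of_apply_mul (contrb A b) (contrb_Gam_mul γ b)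
    (contrb_Gam γ b) (Gam_anticomm_tmul_one hcl b) (Gam_mul_one_tmul_ι γ (vb b)) n,
    show n + 2 - 1 = n + 1 from rfl]
  push_cast
  module
end
end

section
/- Let V be a 4-dimensional real vector space and e: R³ → V be an injective linear map (a boundary coframe), inducing the map W_e^{∂(0,2)}: Λ²V → (R³)* ⊗ Λ³V, x ↦ e ∧ x (wedging the Λ•V parts after viewing e ∈ (R³)*⊗V). This map is injective. Dually, the corresponding map on (2,1)-forms W_e^{∂(2,1)}: Λ²(R³)*⊗V → Λ³(R³)*⊗Λ²V, x ↦ e∧x, is surjective but not injective, with kernel of dimension 6. -/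
noncomputable section

/-- The (pointwise) total exterior algebra `Λ•((ℝ³)* ⊕ V)`, inside which all the spaces
`Ω_∂^{(k,l)} = Λ^k(ℝ³)* ⊗ Λ^l V` are realised (the boundary cotangent factor being
modelled by the 3-dimensional space `ℝ³`). -/
abbrev BExt (V : Type*) [AddCommGroup V] [Module ℝ V] : Type _ :=
  ExteriorAlgebra ℝ ((Fin 3 → ℝ) × V)

/-- The inclusion of a boundary covector into `BExt V`. -/
def ιW (V : Type*) [AddCommGroup V] [Module ℝ V] (w : Fin 3 → ℝ) : BExt V :=
  ExteriorAlgebra.ι ℝ (w, 0)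

/-- The inclusion of a vector of `V` into `BExt V`. -/
def ιV {V : Type*} [AddCommGroup V] [Module ℝ V] (v : V) : BExt V :=
  ExteriorAlgebra.ι ℝ ((0 : Fin 3 → ℝ), v)

/-- The subspace `Ω_∂^{(k,l)} = Λ^k(ℝ³)* ⊗ Λ^l V` of `BExt V`. -/
def Omeg (V : Type*) [AddCommGroup V] [Module ℝ V] (k l : ℕ) : Submodule ℝ (BExt V) :=
  (LinearMap.range ((ExteriorAlgebra.ι ℝ).comp (LinearMap.inl ℝ (Fin 3 → ℝ) V))) ^ k *
    (LinearMap.range ((ExteriorAlgebra.ι ℝ).comp (LinearMap.inr ℝ (Fin 3 → ℝ) V))) ^ l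

/-- The boundary coframe `e ∈ Ω_∂^{(1,1)}` associated to an injective linear map
`e : ℝ³ → V`. -/
def Eelt {V : Type*} [AddCommGroup V] [Module ℝ V] (e : (Fin 3 → ℝ) →ₗ[ℝ] V) : BExt V :=
  ∑ i : Fin 3, ιW V (Pi.single i 1) * ιV (e (Pi.single i 1))

namespace Aux

open ExteriorAlgebra

variable {V : Type*} [AddCommGroup V] [Module ℝ V] (bV : Module.Basis (Fin 4) ℝ V)

/-- the combined basis of `ℝ³ × V`, indexed by `Fin 7`. -/
def b7 : Module.Basis (Fin 7) ℝ ((Fin 3 → ℝ) × V) :=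
  ((Pi.basisFun ℝ (Fin 3)).prod bV).reindex finSumFinEquiv

/-- the generators of the exterior algebra. -/
def gg (c : Fin 7) : BExt V := ExteriorAlgebra.ι ℝ (b7 bV c)

/-- monomial indexed by a list. -/
def mlist (L : List (Fin 7)) : BExt V := (L.map (gg bV)).prod

@[simp] lemma mlist_nil : mlist bV [] = 1 := rfl

@[simp] lemma mlist_cons (c : Fin 7) (L : List (Fin 7)) :
    mlist bV (c :: L) = gg bV c * mlist bV L := by
  simp [mlist]

lemma gsq (c : Fin 7) : gg bV c * gg bV c = 0 := ι_sq_zero _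

lemma gswap (c d : Fin 7) : gg bV c * gg bV d = -(gg bV d * gg bV c) :=
  eq_neg_of_add_eq_zero_left (ι_add_mul_swap _ _)

lemma gg_mul_mlist_of_mem {c : Fin 7} {L : List (Fin 7)} (h : c ∈ L) :
    gg bV c * mlist bV L = 0 := by
  induction L with
  | nil => simp at h
  | cons d L ih =>
    rcases List.mem_cons.1 h with h | h
    · subst h
      rw [mlist_cons, ← mul_assoc, gsq, zero_mul]
    · rw [mlist_cons, ← mul_assoc, gswap bV c d, neg_mul, mul_assoc, ih h, mul_zero, neg_zero]

lemma gg_mul_mlist_of_not_mem {c : Fin 7} {L : List (Fin 7)} (h : c ∉ L) :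
    gg bV c * mlist bV L =
      ((-1 : ℝ)) ^ (L.takeWhile (fun d => decide (d < c))).length •
        mlist bV (L.orderedInsert (· ≤ ·) c) := by
  induction L with
  | nil => simp [List.orderedInsert]
  | cons d L ih =>
    have hcd : c ≠ d := fun h' => h (h' ▸ List.mem_cons_self)
    have hcL : c ∉ L := fun h' => h (List.mem_cons_of_mem _ h')
    by_cases hle : c ≤ d
    · have hdc : ¬ (d < c) := not_lt.2 hle
      rw [List.orderedInsert, if_pos hle, List.takeWhile_cons_of_neg (by simpa using hdc)]
      simp [mlist_cons]
    · have hdc : d < c := lt_of_not_ge hle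
      rw [List.orderedInsert, if_neg hle, List.takeWhile_cons_of_pos (by simpa using hdc)]
      rw [mlist_cons, ← mul_assoc, gswap bV c d, neg_mul, mul_assoc, ih hcL, List.length_cons,
        mlist_cons, mul_smul_comm, pow_succ']
      simp [neg_smul]

/-- combined, `simp`-friendly multiplication lemma. -/
lemma gg_mul_mlist (c : Fin 7) (L : List (Fin 7)) [Decidable (c ∈ L)] :
    gg bV c * mlist bV L =
      if c ∈ L then 0
      else ((-1 : ℝ)) ^ (L.takeWhile (fun d => decide (d < c))).length •
        mlist bV (L.orderedInsert (· ≤ ·) c) := by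
  split
  · exact gg_mul_mlist_of_mem bV ‹_›
  · exact gg_mul_mlist_of_not_mem bV ‹_›

end Aux

namespace Aux

open ExteriorAlgebra Submodule

variable {V : Type*} [AddCommGroup V] [Module ℝ V] (bV : Module.Basis (Fin 4) ℝ V)

lemma b7_low (i : Fin 3) : b7 bV (Fin.castAdd 4 i) = (Pi.single i 1, 0) := by
  rw [b7, Module.Basis.reindex_apply, finSumFinEquiv_symm_apply_castAdd, Module.Basis.prod_apply]
  simp [Pi.basisFun_apply]

lemma b7_high (j : Fin 4) : b7 bV (Fin.natAdd 3 j) = (0, bV j) := by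
  rw [b7, Module.Basis.reindex_apply, finSumFinEquiv_symm_apply_natAdd, Module.Basis.prod_apply]
  simp

lemma gg_low (i : Fin 3) :
    gg bV (Fin.castAdd 4 i) =
      ((ExteriorAlgebra.ι ℝ).comp (LinearMap.inl ℝ (Fin 3 → ℝ) V)) (Pi.single i 1) := by
  simp [gg, b7_low]

lemma gg_high (j : Fin 4) :
    gg bV (Fin.natAdd 3 j) =
      ((ExteriorAlgebra.ι ℝ).comp (LinearMap.inr ℝ (Fin 3 → ℝ) V)) (bV j) := by
  simp [gg, b7_high]

/-- low elements of `Fin 7` come from `Fin 3`. -/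
lemma exists_castAdd {c : Fin 7} (hc : c.val < 3) : ∃ i : Fin 3, c = Fin.castAdd 4 i :=
  ⟨⟨c.val, hc⟩, by ext; simp⟩

lemma exists_natAdd {c : Fin 7} (hc : 3 ≤ c.val) : ∃ j : Fin 4, c = Fin.natAdd 3 j :=
  ⟨⟨c.val - 3, by omega⟩, by ext; simp; omega⟩

/-- the degree predicate for monomial lists. -/
def Pred (k l : ℕ) (L : List (Fin 7)) : Prop :=
  L.Pairwise (· < ·) ∧ L.countP (fun c => decide (c.val < 3)) = k ∧
    L.countP (fun c => decide (3 ≤ c.val)) = l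

instance (k l : ℕ) (L : List (Fin 7)) : Decidable (Pred k l L) := by
  unfold Pred; infer_instance

/-- the span of all monomials of bidegree `(k, l)`. -/
def SpanM (k l : ℕ) : Submodule ℝ (BExt V) :=
  span ℝ {z | ∃ L, Pred k l L ∧ z = mlist bV L}

lemma sorted_orderedInsert_lt {c : Fin 7} {L : List (Fin 7)} (hs : L.Pairwise (· < ·))
    (hc : c ∉ L) : (L.orderedInsert (· ≤ ·) c).Pairwise (· < ·) := by
  induction L with
  | nil => simp [List.orderedInsert]
  | cons d L ih =>
    have hcd : c ≠ d := fun h' => hc (h' ▸ List.mem_cons_self)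
    have hcL : c ∉ L := fun h' => hc (List.mem_cons_of_mem _ h')
    rw [List.pairwise_cons] at hs
    by_cases hle : c ≤ d
    · rw [List.orderedInsert, if_pos hle, List.pairwise_cons, List.pairwise_cons]
      exact ⟨fun b hb => by
        rcases List.mem_cons.1 hb with h | h
        · exact h ▸ lt_of_le_of_ne hle hcd
        · exact lt_of_le_of_lt hle (hs.1 b h), hs⟩
    · rw [List.orderedInsert, if_neg hle, List.pairwise_cons]
      refine ⟨fun b hb => ?_, ih hs.2 hcL⟩
      rcases (List.mem_orderedInsert _).1 hb with h | h
      · exact h ▸ lt_of_not_ge hle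
      · exact hs.1 b h

lemma countP_orderedInsert (p : Fin 7 → Bool) (c : Fin 7) (L : List (Fin 7)) :
    (L.orderedInsert (· ≤ ·) c).countP p = L.countP p + if p c then 1 else 0 := by
  rw [(List.perm_orderedInsert _ c L).countP_eq, List.countP_cons]

lemma pred_orderedInsert_low {k l : ℕ} {c : Fin 7} {L : List (Fin 7)} (hc : c.val < 3)
    (hL : Pred k l L) (hmem : c ∉ L) : Pred (k + 1) l (L.orderedInsert (· ≤ ·) c) := by
  obtain ⟨hs, h1, h2⟩ := hL
  refine ⟨sorted_orderedInsert_lt hs hmem, ?_, ?_⟩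
  · rw [countP_orderedInsert, h1, if_pos (by simpa using hc)]
  · rw [countP_orderedInsert, h2, if_neg (by simpa using hc), add_zero]

lemma pred_orderedInsert_high {k l : ℕ} {c : Fin 7} {L : List (Fin 7)} (hc : 3 ≤ c.val)
    (hL : Pred k l L) (hmem : c ∉ L) : Pred k (l + 1) (L.orderedInsert (· ≤ ·) c) := by
  obtain ⟨hs, h1, h2⟩ := hL
  refine ⟨sorted_orderedInsert_lt hs hmem, ?_, ?_⟩
  · rw [countP_orderedInsert, h1, if_neg (by simpa using Nat.not_lt.2 hc), add_zero]
  · rw [countP_orderedInsert, h2, if_pos (by simpa using hc)]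

lemma gg_mul_mem_spanM_low {k l : ℕ} {c : Fin 7} (hc : c.val < 3) {z : BExt V}
    (hz : z ∈ SpanM bV k l) : gg bV c * z ∈ SpanM bV (k + 1) l := by
  induction hz using Submodule.span_induction with
  | mem x hx =>
    obtain ⟨L, hL, rfl⟩ := hx
    by_cases hmem : c ∈ L
    · rw [gg_mul_mlist_of_mem bV hmem]; exact zero_mem _
    · rw [gg_mul_mlist_of_not_mem bV hmem]
      exact smul_mem _ _ (subset_span ⟨_, pred_orderedInsert_low hc hL hmem, rfl⟩)
  | zero => rw [mul_zero]; exact zero_mem _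
  | add x y _ _ hx hy => rw [mul_add]; exact add_mem hx hy
  | smul a x _ hx => rw [mul_smul_comm]; exact smul_mem _ _ hx

lemma gg_mul_mem_spanM_high {k l : ℕ} {c : Fin 7} (hc : 3 ≤ c.val) {z : BExt V}
    (hz : z ∈ SpanM bV k l) : gg bV c * z ∈ SpanM bV k (l + 1) := by
  induction hz using Submodule.span_induction with
  | mem x hx =>
    obtain ⟨L, hL, rfl⟩ := hx
    by_cases hmem : c ∈ L
    · rw [gg_mul_mlist_of_mem bV hmem]; exact zero_mem _
    · rw [gg_mul_mlist_of_not_mem bV hmem]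
      exact smul_mem _ _ (subset_span ⟨_, pred_orderedInsert_high hc hL hmem, rfl⟩)
  | zero => rw [mul_zero]; exact zero_mem _
  | add x y _ _ hx hy => rw [mul_add]; exact add_mem hx hy
  | smul a x _ hx => rw [mul_smul_comm]; exact smul_mem _ _ hx

end Aux

namespace Aux

open ExteriorAlgebra Submodule

variable {V : Type*} [AddCommGroup V] [Module ℝ V] (bV : Module.Basis (Fin 4) ℝ V)

/-- the `W` submodule. -/
abbrev WS : Submodule ℝ (BExt V) :=
  LinearMap.range ((ExteriorAlgebra.ι ℝ).comp (LinearMap.inl ℝ (Fin 3 → ℝ) V))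

/-- the `B` submodule. -/
abbrev BS : Submodule ℝ (BExt V) :=
  LinearMap.range ((ExteriorAlgebra.ι ℝ).comp (LinearMap.inr ℝ (Fin 3 → ℝ) V))

lemma mul_mem_spanM_of_mem_W {k l : ℕ} {w z : BExt V} (hw : w ∈ WS (V := V))
    (hz : z ∈ SpanM bV k l) : w * z ∈ SpanM bV (k + 1) l := by
  obtain ⟨x, rfl⟩ := LinearMap.mem_range.1 hw
  have hx : x = ∑ i : Fin 3, x i • (Pi.single i 1 : Fin 3 → ℝ) := by
    ext j
    rw [Fintype.sum_apply]
    simp [Pi.single_apply, eq_comm]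
  rw [hx, map_sum]
  rw [Finset.sum_mul]
  refine sum_mem fun i _ => ?_
  rw [map_smul, smul_mul_assoc]
  refine smul_mem _ _ ?_
  rw [← gg_low]
  exact gg_mul_mem_spanM_low bV i.isLt hz

lemma mul_mem_spanM_of_mem_B {k l : ℕ} {b z : BExt V} (hb : b ∈ BS (V := V))
    (hz : z ∈ SpanM bV k l) : b * z ∈ SpanM bV k (l + 1) := by
  obtain ⟨v, rfl⟩ := LinearMap.mem_range.1 hb
  have hv : v = ∑ j : Fin 4, bV.repr v j • bV j := (bV.sum_repr v).symm
  rw [hv, map_sum, Finset.sum_mul]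
  refine sum_mem fun j _ => ?_
  rw [map_smul, smul_mul_assoc]
  refine smul_mem _ _ ?_
  rw [← gg_high]
  exact gg_mul_mem_spanM_high bV (by simp) hz

lemma one_mem_spanM : (1 : BExt V) ∈ SpanM bV 0 0 :=
  subset_span ⟨[], ⟨by simp, rfl, rfl⟩, rfl⟩

lemma pow_B_le_spanM (l : ℕ) : (BS (V := V)) ^ l ≤ SpanM bV 0 l := by
  induction l with
  | zero =>
    rw [pow_zero]
    exact (Submodule.one_le).2 (one_mem_spanM bV)
  | succ l ih =>
    rw [pow_succ']
    exact Submodule.mul_le.2 fun b hb z hz => mul_mem_spanM_of_mem_B bV hb (ih hz)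

lemma omeg_le_spanM (k l : ℕ) : Omeg V k l ≤ SpanM bV k l := by
  induction k with
  | zero =>
    rw [Omeg, pow_zero, one_mul]
    exact pow_B_le_spanM bV l
  | succ k ih =>
    rw [Omeg, pow_succ', mul_assoc]
    exact Submodule.mul_le.2 fun w hw z hz => mul_mem_spanM_of_mem_W bV hw (ih hz)

lemma gg_low_mem_W {c : Fin 7} (hc : c.val < 3) : gg bV c ∈ WS (V := V) := by
  obtain ⟨i, rfl⟩ := exists_castAdd hc
  rw [gg_low]
  exact LinearMap.mem_range_self _ _

lemma gg_high_mem_B {c : Fin 7} (hc : 3 ≤ c.val) : gg bV c ∈ BS (V := V) := by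
  obtain ⟨j, rfl⟩ := exists_natAdd hc
  rw [gg_high]
  exact LinearMap.mem_range_self _ _

lemma mlist_mem_pow_B {L : List (Fin 7)} (h : ∀ c ∈ L, 3 ≤ c.val) :
    mlist bV L ∈ (BS (V := V)) ^ L.length := by
  induction L with
  | nil =>
    rw [show (List.nil : List (Fin 7)).length = 0 from rfl, pow_zero]
    exact Submodule.one_le.1 le_rfl
  | cons c L ih =>
    rw [mlist_cons, List.length_cons, pow_succ']
    exact mul_mem_mul (gg_high_mem_B bV (h c (List.mem_cons_self)))
      (ih fun d hd => h d (List.mem_cons_of_mem _ hd))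

lemma mlist_mem_omeg {k l : ℕ} {L : List (Fin 7)} (hL : Pred k l L) :
    mlist bV L ∈ Omeg V k l := by
  induction L generalizing k l with
  | nil =>
    obtain ⟨-, h1, h2⟩ := hL
    simp only [List.countP_nil] at h1 h2
    subst h1; subst h2
    rw [Omeg, pow_zero, one_mul, pow_zero]
    exact Submodule.one_le.1 le_rfl
  | cons c L ih =>
    obtain ⟨hs, h1, h2⟩ := hL
    rw [List.pairwise_cons] at hs
    by_cases hc : c.val < 3
    · rw [List.countP_cons, if_pos (by simpa using hc)] at h1
      rw [List.countP_cons, if_neg (by simpa using Nat.not_le.2 hc)] at h2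
      have hL' : Pred (L.countP fun c => decide (c.val < 3)) l L := ⟨hs.2, rfl, h2⟩
      obtain rfl : k = (L.countP fun c => decide (c.val < 3)) + 1 := by omega
      rw [mlist_cons, Omeg, pow_succ', mul_assoc]
      exact mul_mem_mul (gg_low_mem_W bV hc) (ih hL')
    · -- all elements are high
      push_neg at hc
      have hall : ∀ d ∈ c :: L, 3 ≤ d.val := by
        intro d hd
        rcases List.mem_cons.1 hd with h | h
        · exact h ▸ hc
        · exact le_trans hc (le_of_lt (hs.1 d h))
      have h1' : k = 0 := by
        rw [← h1, List.countP_eq_zero]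
        intro d hd
        simpa using Nat.not_lt.2 (hall d hd)
      have h2' : l = (c :: L).length := by
        rw [← h2, List.countP_eq_length]
        intro d hd
        simpa using hall d hd
      subst h1'; subst h2'
      rw [Omeg, pow_zero, one_mul]
      exact mlist_mem_pow_B bV hall

end Aux

namespace Aux

open ExteriorAlgebra Submodule

variable {V : Type*} [AddCommGroup V] [Module ℝ V] (bV : Module.Basis (Fin 4) ℝ V)

/-- the determinant-of-coordinates alternating form attached to an index family `J`. -/
def altJ (n : ℕ) (J : Fin n → Fin 7) :
    ((Fin 3 → ℝ) × V) [⋀^Fin n]→ₗ[ℝ] ℝ :=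
  (Matrix.detRowAlternating : AlternatingMap ℝ (Fin n → ℝ) ℝ (Fin n)).compLinearMap
    (LinearMap.pi fun t => (b7 bV).coord (J t))

/-- the dual functional attached to an index family `J`. -/
def Dfn (n : ℕ) (J : Fin n → Fin 7) : BExt V →ₗ[ℝ] ℝ :=
  liftAlternating
    (Function.update (fun i => (0 : ((Fin 3 → ℝ) × V) [⋀^Fin i]→ₗ[ℝ] ℝ)) n (altJ bV n J))

lemma mlist_eq_ιMulti (L : List (Fin 7)) :
    mlist bV L = ιMulti ℝ L.length (fun s => b7 bV (L.get s)) := by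
  rw [ιMulti_apply, mlist]
  conv_lhs => rw [← List.ofFn_get L]
  rw [List.map_ofFn]
  rfl

lemma Dfn_mlist {n : ℕ} (J : Fin n → Fin 7) (L : List (Fin 7)) (h : L.length = n) :
    Dfn bV n J (mlist bV L) =
      (Matrix.of fun s t : Fin n =>
        if L.get (Fin.cast h.symm s) = J t then (1 : ℝ) else 0).det := by
  subst h
  rw [mlist_eq_ιMulti, Dfn, liftAlternating_apply_ιMulti, Function.update_self]
  rw [altJ, AlternatingMap.compLinearMap_apply]
  show Matrix.det (Matrix.of fun s =>
    (LinearMap.pi fun t => (b7 bV).coord (J t)) (b7 bV (L.get s))) = _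
  congr 1
  ext s t
  simp only [Matrix.of_apply, LinearMap.pi_apply, Module.Basis.coord_apply, Module.Basis.repr_self]
  rw [Finsupp.single_apply]
  simp [Fin.cast]

lemma Dfn_mlist_of_length_ne {n : ℕ} (J : Fin n → Fin 7) (L : List (Fin 7))
    (h : L.length ≠ n) : Dfn bV n J (mlist bV L) = 0 := by
  rw [mlist_eq_ιMulti, Dfn, liftAlternating_apply_ιMulti, Function.update_of_ne h]
  rfl

/-- self-pairing of a duplicate-free monomial is `1`. -/
lemma Dfn_self {L : List (Fin 7)} (h : L.Nodup) :
    Dfn bV L.length L.get (mlist bV L) = 1 := by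
  rw [Dfn_mlist bV L.get L rfl]
  have : (Matrix.of fun s t : Fin L.length =>
      if L.get (Fin.cast rfl s) = L.get t then (1 : ℝ) else 0) = 1 := by
    ext s t
    rw [Matrix.of_apply, Matrix.one_apply]
    congr 1
    simp only [Fin.cast_refl, id]
    rw [eq_iff_iff]
    exact ⟨fun hh => h.get_inj_iff.1 hh, fun hh => by rw [hh]⟩
  rw [this, Matrix.det_one]

/-- pairing against a monomial missing one of the indices of `J` is `0`. -/
lemma Dfn_zero {J L : List (Fin 7)} (hlen : L.length = J.length) {c : Fin 7}
    (hcJ : c ∈ J) (hcL : c ∉ L) :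
    Dfn bV J.length J.get (mlist bV L) = 0 := by
  rw [Dfn_mlist bV J.get L hlen]
  obtain ⟨t, ht⟩ := List.mem_iff_get.1 hcJ
  apply Matrix.det_eq_zero_of_column_eq_zero t
  intro s
  rw [Matrix.of_apply, if_neg]
  rw [ht]
  have hm : L.get (Fin.cast hlen.symm s) ∈ L := L.get_mem _
  exact fun hh => hcL (hh ▸ hm)

/-- linear independence via dual functionals. -/
lemma li_of_dual {m : ℕ} (v : Fin m → BExt V) (D : Fin m → (BExt V →ₗ[ℝ] ℝ))
    (h : ∀ t t', D t (v t') = if t = t' then 1 else 0) : LinearIndependent ℝ v := by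
  rw [Fintype.linearIndependent_iff]
  intro c hc t
  have := congrArg (D t) hc
  rw [map_sum, map_zero] at this
  simp only [map_smul, h, smul_eq_mul, mul_ite, mul_one, mul_zero] at this
  simpa using this

end Aux

namespace Aux

open ExteriorAlgebra Submodule

variable {V : Type*} [AddCommGroup V] [Module ℝ V] (bV : Module.Basis (Fin 4) ℝ V)

lemma pred_length {k l : ℕ} {L : List (Fin 7)} (h : Pred k l L) : L.length = k + l := by
  obtain ⟨-, h1, h2⟩ := h
  have := List.length_eq_countP_add_countP (fun c : Fin 7 => decide (c.val < 3)) (l := L)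
  rw [h1] at this
  rw [this]
  congr 1
  rw [← h2]
  apply List.countP_congr
  intro c _
  simp [Nat.not_lt]

/-- the twelve monomials of bidegree `(2,1)`. -/
def fam21 : Fin 12 → List (Fin 7) :=
  ![[0,1,3],[0,1,4],[0,1,5],[0,1,6],[0,2,3],[0,2,4],[0,2,5],[0,2,6],
    [1,2,3],[1,2,4],[1,2,5],[1,2,6]]

/-- the six monomials of bidegree `(3,2)`. -/
def fam32 : Fin 6 → List (Fin 7) :=
  ![[0,1,2,3,4],[0,1,2,3,5],[0,1,2,3,6],[0,1,2,4,5],[0,1,2,4,6],[0,1,2,5,6]]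

/-- the six monomials of bidegree `(0,2)`. -/
def fam02 : Fin 6 → List (Fin 7) :=
  ![[3,4],[3,5],[3,6],[4,5],[4,6],[5,6]]

lemma exists_len5 {α : Type*} {L : List α} (h : L.length = 5) :
    ∃ a b c d e, L = [a, b, c, d, e] := by
  rcases L with _ | ⟨a, _ | ⟨b, _ | ⟨c, _ | ⟨d, _ | ⟨e, _ | ⟨f, rest⟩⟩⟩⟩⟩⟩ <;>
    first
      | exact ⟨_, _, _, _, _, rfl⟩
      | simp at h

lemma cov21 : ∀ L, Pred 2 1 L → ∃ t : Fin 12, fam21 t = L := by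
  intro L hL
  have h3 : L.length = 3 := pred_length hL
  obtain ⟨a, b, c, rfl⟩ := List.length_eq_three.1 h3
  revert hL
  revert a b c
  decide

lemma cov32 : ∀ L, Pred 3 2 L → ∃ t : Fin 6, fam32 t = L := by
  intro L hL
  have h5 : L.length = 5 := pred_length hL
  obtain ⟨a, b, c, d, e, rfl⟩ := exists_len5 h5
  revert hL
  revert a b c d e
  decide

lemma cov02 : ∀ L, Pred 0 2 L → ∃ t : Fin 6, fam02 t = L := by
  intro L hL
  have h2 : L.length = 2 := pred_length hL
  obtain ⟨a, b, rfl⟩ := List.length_eq_two.1 h2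
  revert hL
  revert a b
  decide

/-- linear independence of a family of monomials with distinct duplicate-free lists. -/
lemma fam_li {m : ℕ} (fam : Fin m → List (Fin 7))
    (hnd : ∀ t, (fam t).Nodup)
    (hlen : ∀ t t', (fam t').length = (fam t).length)
    (hne : ∀ t t', t ≠ t' → ∃ c, c ∈ fam t ∧ c ∉ fam t') :
    LinearIndependent ℝ (fun t => mlist bV (fam t)) := by
  refine li_of_dual _ (fun t => Dfn bV (fam t).length (fam t).get) ?_
  intro t t'
  by_cases h : t = t'
  · subst h
    rw [if_pos rfl]
    exact Dfn_self bV (hnd t)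
  · rw [if_neg h]
    obtain ⟨c, hc1, hc2⟩ := hne t t' h
    exact Dfn_zero bV (hlen t t') hc1 hc2

lemma omeg_eq_span {k l : ℕ} {m : ℕ} (fam : Fin m → List (Fin 7))
    (hP : ∀ t, Pred k l (fam t)) (hcov : ∀ L, Pred k l L → ∃ t, fam t = L) :
    Omeg V k l = span ℝ (Set.range fun t => mlist bV (fam t)) := by
  apply le_antisymm
  · refine (omeg_le_spanM bV k l).trans (span_le.2 ?_)
    rintro z ⟨L, hL, rfl⟩
    obtain ⟨t, rfl⟩ := hcov L hL
    exact subset_span ⟨t, rfl⟩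
  · rw [span_le]
    rintro z ⟨t, rfl⟩
    exact mlist_mem_omeg bV (hP t)

lemma omeg21_eq : Omeg V 2 1 = span ℝ (Set.range fun t => mlist bV (fam21 t)) :=
  omeg_eq_span bV fam21 (by decide) cov21

lemma omeg32_eq : Omeg V 3 2 = span ℝ (Set.range fun t => mlist bV (fam32 t)) :=
  omeg_eq_span bV fam32 (by decide) cov32

lemma omeg02_eq : Omeg V 0 2 = span ℝ (Set.range fun t => mlist bV (fam02 t)) :=
  omeg_eq_span bV fam02 (by decide) cov02

lemma li21 : LinearIndependent ℝ (fun t => mlist bV (fam21 t)) :=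
  fam_li bV fam21 (by decide) (by decide) (by decide)

lemma li32 : LinearIndependent ℝ (fun t => mlist bV (fam32 t)) :=
  fam_li bV fam32 (by decide) (by decide) (by decide)

end Aux

namespace Aux

lemma finrank_omeg21 {V : Type*} [AddCommGroup V] [Module ℝ V] (bV : Module.Basis (Fin 4) ℝ V) :
    Module.finrank ℝ (Omeg V 2 1) = 12 := by
  rw [omeg21_eq bV, finrank_span_eq_card (li21 bV), Fintype.card_fin]

lemma finrank_omeg32 {V : Type*} [AddCommGroup V] [Module ℝ V] (bV : Module.Basis (Fin 4) ℝ V) :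
    Module.finrank ℝ (Omeg V 3 2) = 6 := by
  rw [omeg32_eq bV, finrank_span_eq_card (li32 bV), Fintype.card_fin]

end Aux

namespace Aux

open ExteriorAlgebra Submodule

variable {V : Type*} [AddCommGroup V] [Module ℝ V] (bV : Module.Basis (Fin 4) ℝ V)
variable (e : (Fin 3 → ℝ) →ₗ[ℝ] V)

lemma Eelt_eq (hbV : ∀ i : Fin 3, bV (Fin.castSucc i) = e (Pi.single i 1)) :
    Eelt e = ∑ i : Fin 3,
      gg bV (Fin.castAdd 4 i) * gg bV (Fin.natAdd 3 (Fin.castSucc i)) := by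
  rw [Eelt]
  refine Finset.sum_congr rfl fun i _ => ?_
  congr 1
  · rw [gg_low]; rfl
  · rw [gg_high, ← hbV i]; rfl

lemma Eelt_mul_mlist (hbV : ∀ i : Fin 3, bV (Fin.castSucc i) = e (Pi.single i 1))
    (L : List (Fin 7)) :
    Eelt e * mlist bV L =
      mlist bV (0 :: 3 :: L) + mlist bV (1 :: 4 :: L) + mlist bV (2 :: 5 :: L) := by
  rw [Eelt_eq bV e hbV, Fin.sum_univ_three, add_mul, add_mul]
  have e00 : Fin.castAdd (n := 3) 4 0 = (0 : Fin 7) := by decide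
  have e01 : Fin.natAdd 3 (Fin.castSucc (0 : Fin 3)) = (3 : Fin 7) := by decide
  have e10 : Fin.castAdd (n := 3) 4 1 = (1 : Fin 7) := by decide
  have e11 : Fin.natAdd 3 (Fin.castSucc (1 : Fin 3)) = (4 : Fin 7) := by decide
  have e20 : Fin.castAdd (n := 3) 4 2 = (2 : Fin 7) := by decide
  have e21 : Fin.natAdd 3 (Fin.castSucc (2 : Fin 3)) = (5 : Fin 7) := by decide
  rw [e00, e01, e10, e11, e20, e21]
  simp only [mlist_cons, mul_assoc]

/-- value of a dual functional on a monomial, covering the two cases we need. -/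
lemma Dfn_val {J L : List (Fin 7)} (hlen : L.length = J.length) (hnd : J.Nodup)
    (hw : L = J ∨ ∃ c, c ∈ J ∧ c ∉ L) :
    Dfn bV J.length J.get (mlist bV L) = if L = J then 1 else 0 := by
  rcases hw with rfl | ⟨c, hcJ, hcL⟩
  · rw [if_pos rfl]; exact Dfn_self bV hnd
  · have hne : L ≠ J := fun h => hcL (h ▸ hcJ)
    rw [if_neg hne]; exact Dfn_zero bV hlen hcJ hcL

/-- the choice of `E`-component detecting each bidegree-(0,2) monomial. -/
def kf : Fin 6 → Fin 3 := ![2, 1, 1, 0, 0, 0]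

/-- the dual index lists for the injectivity argument. -/
def Jq : Fin 6 → List (Fin 7) :=
  ![[2,5,3,4],[1,4,3,5],[1,4,3,6],[0,3,4,5],[0,3,4,6],[0,3,5,6]]

lemma hdelta (q t : Fin 6) :
    Dfn bV (Jq q).length (Jq q).get (mlist bV (0 :: 3 :: fam02 t))
      + Dfn bV (Jq q).length (Jq q).get (mlist bV (1 :: 4 :: fam02 t))
      + Dfn bV (Jq q).length (Jq q).get (mlist bV (2 :: 5 :: fam02 t))
      = if t = q then 1 else 0 := by
  have H : ∀ q t : Fin 6,
      ((0 :: 3 :: fam02 t).length = (Jq q).length ∧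
        ((0 :: 3 :: fam02 t) = Jq q ∨ ∃ c, c ∈ Jq q ∧ c ∉ (0 :: 3 :: fam02 t))) ∧
      ((1 :: 4 :: fam02 t).length = (Jq q).length ∧
        ((1 :: 4 :: fam02 t) = Jq q ∨ ∃ c, c ∈ Jq q ∧ c ∉ (1 :: 4 :: fam02 t))) ∧
      ((2 :: 5 :: fam02 t).length = (Jq q).length ∧
        ((2 :: 5 :: fam02 t) = Jq q ∨ ∃ c, c ∈ Jq q ∧ c ∉ (2 :: 5 :: fam02 t))) := by
    set_option synthInstance.maxSize 512 in decide
  have hnd : ∀ q : Fin 6, (Jq q).Nodup := by decide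
  have heq0 : ∀ q t : Fin 6, ((0 :: 3 :: fam02 t) = Jq q) ↔ (t = q ∧ kf q = 0) := by decide
  have heq1 : ∀ q t : Fin 6, ((1 :: 4 :: fam02 t) = Jq q) ↔ (t = q ∧ kf q = 1) := by decide
  have heq2 : ∀ q t : Fin 6, ((2 :: 5 :: fam02 t) = Jq q) ↔ (t = q ∧ kf q = 2) := by decide
  rw [Dfn_val bV (H q t).1.1 (hnd q) (H q t).1.2,
    Dfn_val bV (H q t).2.1.1 (hnd q) (H q t).2.1.2,
    Dfn_val bV (H q t).2.2.1 (hnd q) (H q t).2.2.2]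
  simp only [heq0, heq1, heq2]
  by_cases ht : t = q
  · subst ht
    have h3 : ∀ s : Fin 6, kf s = 0 ∨ kf s = 1 ∨ kf s = 2 := by decide
    rcases h3 t with h | h | h <;> simp [h]
  · simp [ht]

end Aux

namespace Aux

open ExteriorAlgebra Submodule

variable {V : Type*} [AddCommGroup V] [Module ℝ V] (bV : Module.Basis (Fin 4) ℝ V)
variable (e : (Fin 3 → ℝ) →ₗ[ℝ] V)

lemma term_zero1 (c d : Fin 7) (L : List (Fin 7)) (h : d ∈ L) :
    mlist bV (c :: d :: L) = 0 := by
  rw [mlist_cons, mlist_cons, gg_mul_mlist_of_mem bV h, mul_zero]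

lemma term_zero2 (c d : Fin 7) (L : List (Fin 7)) (hd : d ∉ L)
    (hc : c ∈ L.orderedInsert (· ≤ ·) d) : mlist bV (c :: d :: L) = 0 := by
  rw [mlist_cons, mlist_cons, gg_mul_mlist_of_not_mem bV hd, mul_smul_comm,
    gg_mul_mlist_of_mem bV hc, smul_zero]

lemma term_eval (c d : Fin 7) (L M : List (Fin 7)) (hd : d ∉ L)
    (hc : c ∉ L.orderedInsert (· ≤ ·) d)
    (hM : (L.orderedInsert (· ≤ ·) d).orderedInsert (· ≤ ·) c = M) :
    mlist bV (c :: d :: L) =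
      ((-1 : ℝ)) ^ ((L.takeWhile fun x => decide (x < d)).length +
        ((L.orderedInsert (· ≤ ·) d).takeWhile fun x => decide (x < c)).length) •
        mlist bV M := by
  rw [mlist_cons, mlist_cons, gg_mul_mlist_of_not_mem bV hd, mul_smul_comm,
    gg_mul_mlist_of_not_mem bV hc, hM, smul_smul, ← pow_add, add_comm]

lemma term_even (c d : Fin 7) (L M : List (Fin 7)) (hd : d ∉ L)
    (hc : c ∉ L.orderedInsert (· ≤ ·) d)
    (hM : (L.orderedInsert (· ≤ ·) d).orderedInsert (· ≤ ·) c = M)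
    (hpar : ((L.takeWhile fun x => decide (x < d)).length +
      ((L.orderedInsert (· ≤ ·) d).takeWhile fun x => decide (x < c)).length) % 2 = 0) :
    mlist bV (c :: d :: L) = mlist bV M := by
  rw [term_eval bV c d L M hd hc hM, Even.neg_one_pow (Nat.even_iff.2 hpar), one_smul]

lemma term_odd (c d : Fin 7) (L M : List (Fin 7)) (hd : d ∉ L)
    (hc : c ∉ L.orderedInsert (· ≤ ·) d)
    (hM : (L.orderedInsert (· ≤ ·) d).orderedInsert (· ≤ ·) c = M)
    (hpar : ((L.takeWhile fun x => decide (x < d)).length +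
      ((L.orderedInsert (· ≤ ·) d).takeWhile fun x => decide (x < c)).length) % 2 = 1) :
    mlist bV (c :: d :: L) = -mlist bV M := by
  rw [term_eval bV c d L M hd hc hM, Odd.neg_one_pow (Nat.odd_iff.2 hpar), neg_smul, one_smul]

/-- Statement 1: injectivity on `Ω^{(0,2)}`. -/
lemma stmt1 (hbV : ∀ i : Fin 3, bV (Fin.castSucc i) = e (Pi.single i 1)) :
    ∀ x ∈ Omeg V 0 2, Eelt e * x = 0 → x = 0 := by
  intro x hx hEx
  rw [omeg02_eq bV] at hx
  obtain ⟨c, hcx⟩ := (mem_span_range_iff_exists_fun ℝ).1 hx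
  subst hcx
  have hc : ∀ q : Fin 6, c q = 0 := by
    intro q
    have h0 := congrArg (Dfn bV (Jq q).length (Jq q).get) hEx
    rw [map_zero, Finset.mul_sum] at h0
    simp only [mul_smul_comm, Eelt_mul_mlist bV e hbV, map_sum, map_smul, map_add] at h0
    simp only [smul_eq_mul] at h0
    have h1 : ∀ t : Fin 6,
        Dfn bV (Jq q).length (Jq q).get (mlist bV (0 :: 3 :: fam02 t))
          + Dfn bV (Jq q).length (Jq q).get (mlist bV (1 :: 4 :: fam02 t))
          + Dfn bV (Jq q).length (Jq q).get (mlist bV (2 :: 5 :: fam02 t))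
          = if t = q then 1 else 0 := fun t => hdelta bV q t
    rw [Finset.sum_congr rfl (fun t _ => by rw [h1 t])] at h0
    simpa using h0
  simp [hc]

/-- the preimage lists for surjectivity. -/
def xl : Fin 6 → List (Fin 7) :=
  ![[1,2,4],[1,2,5],[1,2,6],[0,2,5],[0,2,6],[0,1,6]]

/-- the signs for surjectivity. -/
def sg : Fin 6 → ℝ := ![1,1,1,-1,-1,1]

lemma surj32 (hbV : ∀ i : Fin 3, bV (Fin.castSucc i) = e (Pi.single i 1)) (q : Fin 6) :
    Eelt e * (sg q • mlist bV (xl q)) = mlist bV (fam32 q) := by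
  fin_cases q
  · show Eelt e * ((1 : ℝ) • mlist bV [1,2,4]) = mlist bV [0,1,2,3,4]
    rw [mul_smul_comm, Eelt_mul_mlist bV e hbV,
      term_even bV 0 3 [1,2,4] [0,1,2,3,4] (by decide) (by decide) (by decide) (by decide),
      term_zero1 bV 1 4 [1,2,4] (by decide),
      term_zero2 bV 2 5 [1,2,4] (by decide) (by decide)]
    simp
  · show Eelt e * ((1 : ℝ) • mlist bV [1,2,5]) = mlist bV [0,1,2,3,5]
    rw [mul_smul_comm, Eelt_mul_mlist bV e hbV,
      term_even bV 0 3 [1,2,5] [0,1,2,3,5] (by decide) (by decide) (by decide) (by decide),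
      term_zero2 bV 1 4 [1,2,5] (by decide) (by decide),
      term_zero1 bV 2 5 [1,2,5] (by decide)]
    simp
  · show Eelt e * ((1 : ℝ) • mlist bV [1,2,6]) = mlist bV [0,1,2,3,6]
    rw [mul_smul_comm, Eelt_mul_mlist bV e hbV,
      term_even bV 0 3 [1,2,6] [0,1,2,3,6] (by decide) (by decide) (by decide) (by decide),
      term_zero2 bV 1 4 [1,2,6] (by decide) (by decide),
      term_zero2 bV 2 5 [1,2,6] (by decide) (by decide)]
    simp
  · show Eelt e * ((-1 : ℝ) • mlist bV [0,2,5]) = mlist bV [0,1,2,4,5]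
    rw [mul_smul_comm, Eelt_mul_mlist bV e hbV,
      term_zero2 bV 0 3 [0,2,5] (by decide) (by decide),
      term_odd bV 1 4 [0,2,5] [0,1,2,4,5] (by decide) (by decide) (by decide) (by decide),
      term_zero1 bV 2 5 [0,2,5] (by decide)]
    simp
  · show Eelt e * ((-1 : ℝ) • mlist bV [0,2,6]) = mlist bV [0,1,2,4,6]
    rw [mul_smul_comm, Eelt_mul_mlist bV e hbV,
      term_zero2 bV 0 3 [0,2,6] (by decide) (by decide),
      term_odd bV 1 4 [0,2,6] [0,1,2,4,6] (by decide) (by decide) (by decide) (by decide),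
      term_zero2 bV 2 5 [0,2,6] (by decide) (by decide)]
    simp
  · show Eelt e * ((1 : ℝ) • mlist bV [0,1,6]) = mlist bV [0,1,2,5,6]
    rw [mul_smul_comm, Eelt_mul_mlist bV e hbV,
      term_zero2 bV 0 3 [0,1,6] (by decide) (by decide),
      term_zero2 bV 1 4 [0,1,6] (by decide) (by decide),
      term_even bV 2 5 [0,1,6] [0,1,2,5,6] (by decide) (by decide) (by decide) (by decide)]
    simp

/-- Statement 3: the kernel element. -/
lemma stmt3 (hbV : ∀ i : Fin 3, bV (Fin.castSucc i) = e (Pi.single i 1)) :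
    ∃ x ∈ Omeg V 2 1, Eelt e * x = 0 ∧ x ≠ 0 := by
  refine ⟨mlist bV [0,1,5], mlist_mem_omeg bV (by decide), ?_, ?_⟩
  · rw [Eelt_mul_mlist bV e hbV,
      term_zero2 bV 0 3 [0,1,5] (by decide) (by decide),
      term_zero2 bV 1 4 [0,1,5] (by decide) (by decide),
      term_zero1 bV 2 5 [0,1,5] (by decide)]
    simp
  · intro h
    have hD := Dfn_self bV (L := [0,1,5]) (by decide)
    rw [h, map_zero] at hD
    exact one_ne_zero hD.symm

end Aux

open Submodule in
set_option maxHeartbeats 2000000 in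
/-- Let `V` be a 4-dimensional real vector space and `e : ℝ³ → V` an
injective linear map (a boundary coframe).  The induced wedge map
`W_e^{∂(0,2)} : Λ²V → (ℝ³)* ⊗ Λ³V`, `x ↦ e ∧ x` is injective.  Dually, the map on
`(2,1)`-forms `W_e^{∂(2,1)} : Λ²(ℝ³)* ⊗ V → Λ³(ℝ³)* ⊗ Λ²V`, `x ↦ e ∧ x` is surjective
but not injective, with kernel of dimension 6. -/
theorem boundary_coframe_wedge_properties
    {V : Type*} [AddCommGroup V] [Module ℝ V]
    (hV : Module.finrank ℝ V = 4)
    (e : (Fin 3 → ℝ) →ₗ[ℝ] V) (he : Function.Injective e) :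
    (∀ x ∈ Omeg V 0 2, Eelt e * x = 0 → x = 0)
    ∧ (∀ y ∈ Omeg V 3 2, ∃ x ∈ Omeg V 2 1, Eelt e * x = y)
    ∧ ¬ (∀ x ∈ Omeg V 2 1, Eelt e * x = 0 → x = 0)
    ∧ Module.finrank ℝ
        ↥(Omeg V 2 1 ⊓ LinearMap.ker (LinearMap.mulLeft ℝ (Eelt e))) = 6 := by
  classical
  haveI : FiniteDimensional ℝ V := FiniteDimensional.of_finrank_eq_succ (n := 3) hV
  -- construct an adapted basis of `V`
  have hli : LinearIndependent ℝ (fun i : Fin 3 => e (Pi.single i 1)) := by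
    have h1 := (Pi.basisFun ℝ (Fin 3)).linearIndependent.map' e (LinearMap.ker_eq_bot.2 he)
    have h2 : (⇑e ∘ ⇑(Pi.basisFun ℝ (Fin 3))) = fun i : Fin 3 => e (Pi.single i 1) := by
      funext i; simp [Pi.basisFun_apply]
    rwa [h2] at h1
  have hspan_ne : span ℝ (Set.range fun i : Fin 3 => e (Pi.single i 1)) ≠ ⊤ := by
    intro h
    have h3 := finrank_span_eq_card hli
    rw [h, finrank_top, hV, Fintype.card_fin] at h3
    omega
  obtain ⟨u3, hu3⟩ : ∃ v : V, v ∉ span ℝ (Set.range fun i : Fin 3 => e (Pi.single i 1)) := by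
    by_contra h
    push_neg at h
    exact hspan_ne (Submodule.eq_top_iff'.2 h)
  have hsnoc : LinearIndependent ℝ
      (Fin.snoc (fun i : Fin 3 => e (Pi.single i 1)) u3 : Fin 4 → V) :=
    linearIndependent_fin_snoc.2 ⟨hli, hu3⟩
  let bV : Module.Basis (Fin 4) ℝ V :=
    basisOfLinearIndependentOfCardEqFinrank hsnoc (by rw [hV, Fintype.card_fin])
  have hbV : ∀ i : Fin 3, bV (Fin.castSucc i) = e (Pi.single i 1) := by
    intro i
    show (basisOfLinearIndependentOfCardEqFinrank hsnoc _) _ = _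
    rw [coe_basisOfLinearIndependentOfCardEqFinrank]
    exact Fin.snoc_castSucc _ _ i
  -- statement 2
  have hPxl : ∀ q : Fin 6, Aux.Pred 2 1 (Aux.xl q) := by decide
  have hmap : Omeg V 3 2 ≤ Submodule.map (LinearMap.mulLeft ℝ (Eelt e)) (Omeg V 2 1) := by
    rw [Aux.omeg32_eq bV, span_le]
    rintro z ⟨q, rfl⟩
    exact ⟨Aux.sg q • Aux.mlist bV (Aux.xl q),
      smul_mem _ _ (Aux.mlist_mem_omeg bV (hPxl q)), Aux.surj32 bV e hbV q⟩
  have hsurj : ∀ y ∈ Omeg V 3 2, ∃ x ∈ Omeg V 2 1, Eelt e * x = y := by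
    intro y hy
    obtain ⟨x, hx, hEx⟩ := hmap hy
    exact ⟨x, hx, hEx⟩
  -- statement 4 preliminaries: `E · Ω^{(2,1)} ⊆ Ω^{(3,2)}`
  have hE_mem : Eelt e ∈ (Aux.WS (V := V)) * (Aux.BS (V := V)) := by
    rw [Eelt]
    refine sum_mem fun i _ => mul_mem_mul ?_ ?_
    · exact ⟨Pi.single i 1, rfl⟩
    · exact ⟨e (Pi.single i 1), rfl⟩
  have hBW : (Aux.BS (V := V)) * (Aux.WS (V := V)) ≤ (Aux.WS (V := V)) * (Aux.BS (V := V)) := by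
    refine Submodule.mul_le.2 ?_
    rintro b ⟨v, rfl⟩ w ⟨u, rfl⟩
    have hswap : ((ExteriorAlgebra.ι ℝ).comp (LinearMap.inr ℝ (Fin 3 → ℝ) V)) v *
        ((ExteriorAlgebra.ι ℝ).comp (LinearMap.inl ℝ (Fin 3 → ℝ) V)) u =
        -(((ExteriorAlgebra.ι ℝ).comp (LinearMap.inl ℝ (Fin 3 → ℝ) V)) u *
          ((ExteriorAlgebra.ι ℝ).comp (LinearMap.inr ℝ (Fin 3 → ℝ) V)) v) :=
      eq_neg_of_add_eq_zero_left (ExteriorAlgebra.ι_add_mul_swap _ _)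
    rw [hswap]
    exact neg_mem (mul_mem_mul (LinearMap.mem_range_self _ _) (LinearMap.mem_range_self _ _))
  have hBW2 : (Aux.BS (V := V)) * (Aux.WS (V := V)) ^ 2 ≤
      (Aux.WS (V := V)) ^ 2 * (Aux.BS (V := V)) := by
    rw [pow_two, ← mul_assoc]
    calc (Aux.BS (V := V)) * (Aux.WS (V := V)) * (Aux.WS (V := V))
        ≤ (Aux.WS (V := V)) * (Aux.BS (V := V)) * (Aux.WS (V := V)) :=
          mul_le_mul' hBW le_rfl
      _ = (Aux.WS (V := V)) * ((Aux.BS (V := V)) * (Aux.WS (V := V))) := by rw [mul_assoc]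
      _ ≤ (Aux.WS (V := V)) * ((Aux.WS (V := V)) * (Aux.BS (V := V))) :=
          mul_le_mul' le_rfl hBW
      _ = (Aux.WS (V := V)) * (Aux.WS (V := V)) * (Aux.BS (V := V)) := by rw [mul_assoc]
  have hmul_le : ((Aux.WS (V := V)) * (Aux.BS (V := V))) * Omeg V 2 1 ≤ Omeg V 3 2 := by
    set W := Aux.WS (V := V) with hW
    set B := Aux.BS (V := V) with hB
    have h1 : (W * B) * Omeg V 2 1 = W * ((B * W ^ 2) * B ^ 1) := by
      show (W * B) * (W ^ 2 * B ^ 1) = _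
      rw [mul_assoc, ← mul_assoc B (W ^ 2) (B ^ 1)]
    have h2 : W * ((B * W ^ 2) * B ^ 1) ≤ W * ((W ^ 2 * B) * B ^ 1) :=
      mul_le_mul' le_rfl (mul_le_mul' hBW2 le_rfl)
    have h3 : W * ((W ^ 2 * B) * B ^ 1) = Omeg V 3 2 := by
      show _ = W ^ 3 * B ^ 2
      rw [pow_one, mul_assoc (W ^ 2) B B, ← mul_assoc W (W ^ 2), ← pow_succ', ← pow_two]
    rw [h1, ← h3]
    exact h2
  have hmulE : ∀ z ∈ Omeg V 2 1, Eelt e * z ∈ Omeg V 3 2 := fun z hz =>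
    hmul_le (mul_mem_mul hE_mem hz)
  -- the restricted map and rank-nullity
  haveI hfd21 : FiniteDimensional ℝ (Omeg V 2 1) :=
    (Aux.omeg21_eq bV) ▸ FiniteDimensional.span_of_finite ℝ (Set.finite_range _)
  have hfinal : Module.finrank ℝ
      ↥(Omeg V 2 1 ⊓ LinearMap.ker (LinearMap.mulLeft ℝ (Eelt e))) = 6 := by
    set φ : (Omeg V 2 1) →ₗ[ℝ] BExt V :=
      (LinearMap.mulLeft ℝ (Eelt e)).comp (Omeg V 2 1).subtype with hφ
    have hrange : LinearMap.range φ = Omeg V 3 2 := by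
      rw [hφ, LinearMap.range_comp, Submodule.range_subtype]
      apply le_antisymm
      · rintro y ⟨x, hx, rfl⟩
        exact hmulE x hx
      · exact hmap
    have hker : Module.finrank ℝ (LinearMap.ker φ) =
        Module.finrank ℝ ↥(Omeg V 2 1 ⊓ LinearMap.ker (LinearMap.mulLeft ℝ (Eelt e))) := by
      rw [hφ, LinearMap.ker_comp]
      rw [← Submodule.map_comap_subtype]
      exact (Submodule.equivMapOfInjective _ (Submodule.injective_subtype _) _).finrank_eq
    have hrn := LinearMap.finrank_range_add_finrank_ker φ
    rw [hrange, Aux.finrank_omeg32 bV, Aux.finrank_omeg21 bV] at hrn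
    rw [← hker]
    omega
  refine ⟨Aux.stmt1 bV e hbV, hsurj, ?_, hfinal⟩
  intro hinj
  obtain ⟨x, hx, hE0, hne⟩ := Aux.stmt3 bV e hbV
  exact hne (hinj x hx hE0)
end
end

section
/- (Unique fixing of the representative k̃) Let V be 4-dimensional, e: R³→V injective, ε_n completing to a basis, with nondegenerate boundary metric. For every k̃ ∈ Λ²(R³)*⊗V there exists a unique decomposition k̃ = ǩ + r with r ∈ Ker(W_e^{∂(2,1)}) (i.e. e∧r = 0) and ε_n∧ǩ ∈ Im(W_e^{∂(1,1)}: Λ¹(R³)*⊗V → Λ²(R³)*⊗Λ²V). Moreover ǩ depends only on the class of k̃ in (Λ²(R³)*⊗V)/Ker(W_e^{∂(2,1)}). -/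
noncomputable section

namespace Stmt17
variable {V : Type*} [AddCommGroup V] [Module ℝ V]
open ExteriorAlgebra

lemma gen_swap (u v : (Fin 3 → ℝ) × V) (x : BExt V) :
    ι ℝ u * (ι ℝ v * x) = -(ι ℝ v * (ι ℝ u * x)) := by
  have h := ι_add_mul_swap (R := ℝ) u v
  have : ι ℝ u * ι ℝ v = -(ι ℝ v * ι ℝ u) := eq_neg_of_add_eq_zero_left h
  rw [← mul_assoc, this, ← mul_assoc, neg_mul]

lemma gen_self (u : (Fin 3 → ℝ) × V) (x : BExt V) :
    ι ℝ u * (ι ℝ u * x) = 0 := by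
  rw [← mul_assoc, ι_sq_zero, zero_mul]

variable (e : (Fin 3 → ℝ) →ₗ[ℝ] V) (εn : V)

/-- the basis of `V` as a function -/
def fb : Fin 4 → V := Fin.snoc (fun i : Fin 3 => e (Pi.single i 1)) εn

def wg (i : Fin 3) : BExt V := ιW V (Pi.single i 1)
def vg (a : Fin 4) : BExt V := ιV (fb e εn a)

lemma vg_cast (i : Fin 3) : vg e εn i.castSucc = ιV (e (Pi.single i 1)) := by
  simp [vg, fb]

lemma vg_last : vg e εn 3 = ιV εn := by
  have : (3 : Fin 4) = Fin.last 3 := rfl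
  rw [vg, fb, this, Fin.snoc_last]

lemma wg_def (i : Fin 3) : wg (V := V) i = ι ℝ (Pi.single i 1, (0 : V)) := rfl
lemma vg_def (a : Fin 4) : vg e εn a = ι ℝ ((0 : Fin 3 → ℝ), fb e εn a) := rfl

lemma ww_swap (i j : Fin 3) (x : BExt V) :
    wg (V := V) i * (wg j * x) = -(wg j * (wg i * x)) := gen_swap _ _ _
lemma ww_self (i : Fin 3) (x : BExt V) : wg (V := V) i * (wg i * x) = 0 := gen_self _ _
lemma vw_swap (v : V) (i : Fin 3) (x : BExt V) :
    ιV v * (wg i * x) = -(wg i * (ιV v * x)) := gen_swap _ _ _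
lemma vv_swap (a b : Fin 4) (x : BExt V) :
    vg e εn a * (vg e εn b * x) = -(vg e εn b * (vg e εn a * x)) := gen_swap _ _ _
lemma vv_swap' (v w : V) : ιV (V := V) v * ιV w = -(ιV w * ιV v) := by
  have := gen_swap (V := V) ((0 : Fin 3 → ℝ), v) ((0 : Fin 3 → ℝ), w) 1
  simpa [ιV, mul_one] using this
lemma vv_self (v : V) (x : BExt V) : ιV v * (ιV v * x) = 0 := gen_self _ _

lemma E_expand : Eelt e = ∑ i : Fin 3, wg i * vg e εn i.castSucc := by
  unfold Eelt
  refine Finset.sum_congr rfl fun i _ => ?_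
  rw [vg_cast]; rfl


def mon21 (m : Fin 3) (a : Fin 4) : BExt V := wg (m+1) * (wg (m+2) * vg e εn a)
def mon11 (i : Fin 3) (b : Fin 4) : BExt V := wg i * vg e εn b
def mon4 (i j : Fin 3) (a b : Fin 4) : BExt V :=
  wg i * (wg j * (vg e εn a * vg e εn b))
def mon5 (x y : Fin 4) : BExt V :=
  wg 0 * (wg 1 * (wg 2 * (vg e εn x * vg e εn y)))

lemma vg_w (a : Fin 4) (i : Fin 3) (x : BExt V) :
    vg e εn a * (wg i * x) = -(wg i * (vg e εn a * x)) := gen_swap _ _ _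

lemma rel1_0 (e : (Fin 3 → ℝ) →ₗ[ℝ] V) (εn : V) (a : Fin 4) :
    Eelt e * (wg 1 * (wg 2 * vg e εn a)) = mon5 e εn 0 a := by
  rw [E_expand e εn, Finset.sum_mul, Fin.sum_univ_three]
  have c0 : (Fin.castSucc 0 : Fin 4) = 0 := rfl
  have c1 : (Fin.castSucc 1 : Fin 4) = 1 := rfl
  have c2 : (Fin.castSucc 2 : Fin 4) = 2 := rfl
  rw [c0, c1, c2]
  have t0 : wg 0 * vg e εn 0 * (wg 1 * (wg 2 * vg e εn a)) = mon5 e εn 0 a := by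
    simp only [mul_assoc, vg_w, mul_neg, neg_neg, mon5]
  have t1 : wg (V := V) 1 * vg e εn 1 * (wg 1 * (wg 2 * vg e εn a)) = 0 := by
    simp only [mul_assoc, vg_w, mul_neg, neg_neg, ww_self, mul_zero, neg_zero]
  have t2 : wg (V := V) 2 * vg e εn 2 * (wg 1 * (wg 2 * vg e εn a)) = 0 := by
    simp only [mul_assoc, vg_w, mul_neg, neg_neg]
    rw [ww_swap 1 2]
    simp only [mul_neg, ww_self, mul_zero, neg_zero]
  rw [t0, t1, t2, add_zero, add_zero]

end Stmt17

namespace Stmt17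
variable {V : Type*} [AddCommGroup V] [Module ℝ V]
open ExteriorAlgebra

lemma rel1_1 (e : (Fin 3 → ℝ) →ₗ[ℝ] V) (εn : V) (a : Fin 4) :
    Eelt e * (wg 2 * (wg 0 * vg e εn a)) = mon5 e εn 1 a := by
  rw [E_expand e εn, Finset.sum_mul, Fin.sum_univ_three]
  rw [show (Fin.castSucc 0 : Fin 4) = 0 from rfl, show (Fin.castSucc 1 : Fin 4) = 1 from rfl,
    show (Fin.castSucc 2 : Fin 4) = 2 from rfl]
  have t0 : wg (V := V) 0 * vg e εn 0 * (wg 2 * (wg 0 * vg e εn a)) = 0 := by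
    simp only [mul_assoc, vg_w, mul_neg, neg_neg]
    rw [ww_swap 2 0]
    simp only [mul_neg, ww_self, mul_zero, neg_zero]
  have t1 : wg (V := V) 1 * vg e εn 1 * (wg 2 * (wg 0 * vg e εn a)) = mon5 e εn 1 a := by
    simp only [mul_assoc, vg_w, mul_neg, neg_neg]
    rw [ww_swap 2 0]
    rw [mul_neg, ww_swap 1 0, neg_neg, mon5]
  have t2 : wg (V := V) 2 * vg e εn 2 * (wg 2 * (wg 0 * vg e εn a)) = 0 := by
    simp only [mul_assoc, vg_w, mul_neg, neg_neg, ww_self, mul_zero, neg_zero]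
  rw [t0, t1, t2, add_zero, zero_add]

lemma rel1_2 (e : (Fin 3 → ℝ) →ₗ[ℝ] V) (εn : V) (a : Fin 4) :
    Eelt e * (wg 0 * (wg 1 * vg e εn a)) = mon5 e εn 2 a := by
  rw [E_expand e εn, Finset.sum_mul, Fin.sum_univ_three]
  rw [show (Fin.castSucc 0 : Fin 4) = 0 from rfl, show (Fin.castSucc 1 : Fin 4) = 1 from rfl,
    show (Fin.castSucc 2 : Fin 4) = 2 from rfl]
  have t0 : wg (V := V) 0 * vg e εn 0 * (wg 0 * (wg 1 * vg e εn a)) = 0 := by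
    simp only [mul_assoc, vg_w, mul_neg, neg_neg, ww_self, mul_zero, neg_zero]
  have t1 : wg (V := V) 1 * vg e εn 1 * (wg 0 * (wg 1 * vg e εn a)) = 0 := by
    simp only [mul_assoc, vg_w, mul_neg, neg_neg]
    rw [ww_swap 0 1]
    simp only [mul_neg, ww_self, mul_zero, neg_zero]
  have t2 : wg (V := V) 2 * vg e εn 2 * (wg 0 * (wg 1 * vg e εn a)) = mon5 e εn 2 a := by
    simp only [mul_assoc, vg_w, mul_neg, neg_neg]
    rw [ww_swap 2 0, ww_swap 2 1]
    simp only [mul_neg, neg_neg]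
    rw [mon5]
  rw [t0, t1, t2, zero_add, zero_add]

lemma rel1 (e : (Fin 3 → ℝ) →ₗ[ℝ] V) (εn : V) (m : Fin 3) (a : Fin 4) :
    Eelt e * mon21 e εn m a = mon5 e εn m.castSucc a := by
  fin_cases m
  · exact rel1_0 e εn a
  · exact rel1_1 e εn a
  · exact rel1_2 e εn a

lemma rel2 (e : (Fin 3 → ℝ) →ₗ[ℝ] V) (εn : V) (m : Fin 3) (a : Fin 4) :
    ιV εn * mon21 e εn m a = wg (m+1) * (wg (m+2) * (vg e εn 3 * vg e εn a)) := by
  rw [← vg_last e εn, mon21]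
  simp only [vg_w, mul_neg, neg_neg]

lemma rel3 (e : (Fin 3 → ℝ) →ₗ[ℝ] V) (εn : V) (i : Fin 3) (b : Fin 4) :
    Eelt e * (wg i * vg e εn b) =
      -∑ q : Fin 3, wg q * (wg i * (vg e εn q.castSucc * vg e εn b)) := by
  rw [E_expand e εn, Finset.sum_mul, ← Finset.sum_neg_distrib]
  refine Finset.sum_congr rfl fun q _ => ?_
  simp only [mul_assoc, vg_w, mul_neg, neg_neg]

end Stmt17

namespace Stmt17
variable {V : Type*} [AddCommGroup V] [Module ℝ V]
open ExteriorAlgebra Submodule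

abbrev Wsub (V : Type*) [AddCommGroup V] [Module ℝ V] : Submodule ℝ (BExt V) :=
  LinearMap.range ((ExteriorAlgebra.ι ℝ).comp (LinearMap.inl ℝ (Fin 3 → ℝ) V))
abbrev Vsub (V : Type*) [AddCommGroup V] [Module ℝ V] : Submodule ℝ (BExt V) :=
  LinearMap.range ((ExteriorAlgebra.ι ℝ).comp (LinearMap.inr ℝ (Fin 3 → ℝ) V))

lemma ιW_memW (w : Fin 3 → ℝ) : ιW V w ∈ Wsub V := ⟨w, rfl⟩
lemma ιV_memV (v : V) : ιV v ∈ Vsub V := ⟨v, rfl⟩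

lemma omeg21_eq : Omeg V 2 1 = Wsub V * Wsub V * Vsub V := by
  rw [Omeg, pow_one, sq]

lemma omeg11_eq : Omeg V 1 1 = Wsub V * Vsub V := by
  rw [Omeg, pow_one, pow_one]

lemma mem21 (w1 w2 : Fin 3 → ℝ) (v : V) : ιW V w1 * (ιW V w2 * ιV v) ∈ Omeg V 2 1 := by
  rw [omeg21_eq, ← mul_assoc]
  exact mul_mem_mul (mul_mem_mul (ιW_memW w1) (ιW_memW w2)) (ιV_memV v)

lemma mem11 (w : Fin 3 → ℝ) (v : V) : ιW V w * ιV v ∈ Omeg V 1 1 := by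
  rw [omeg11_eq]
  exact mul_mem_mul (ιW_memW w) (ιV_memV v)

lemma mon21_mem (e : (Fin 3 → ℝ) →ₗ[ℝ] V) (εn : V) (m : Fin 3) (a : Fin 4) :
    mon21 e εn m a ∈ Omeg V 2 1 := mem21 _ _ _

lemma mon11_mem (e : (Fin 3 → ℝ) →ₗ[ℝ] V) (εn : V) (i : Fin 3) (b : Fin 4) :
    mon11 e εn i b ∈ Omeg V 1 1 := mem11 _ _

lemma ιW_expand (w : Fin 3 → ℝ) : ιW V w = ∑ i : Fin 3, w i • wg i := by
  have h1 : w = ∑ i : Fin 3, w i • (Pi.single i 1 : Fin 3 → ℝ) := by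
    conv_lhs => rw [← Finset.univ_sum_single w]
    exact Finset.sum_congr rfl fun i _ => by rw [← Pi.single_smul, smul_eq_mul, mul_one]
  have hw : (w, (0 : V)) = ∑ i : Fin 3, w i • ((Pi.single i 1 : Fin 3 → ℝ), (0 : V)) := by
    calc (w, (0 : V)) = LinearMap.inl ℝ (Fin 3 → ℝ) V w := rfl
    _ = LinearMap.inl ℝ (Fin 3 → ℝ) V (∑ i : Fin 3, w i • (Pi.single i 1 : Fin 3 → ℝ)) := by
          rw [← h1]
    _ = _ := by rw [map_sum]; exact Finset.sum_congr rfl fun i _ => by rw [map_smul]; rfl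
  rw [ιW, hw, map_sum]
  exact Finset.sum_congr rfl fun i _ => by rw [map_smul]; rfl

lemma ιV_expand (e : (Fin 3 → ℝ) →ₗ[ℝ] V) (εn : V)
    (hspan : Submodule.span ℝ (Set.range (fb e εn)) = ⊤) (v : V) :
    ∃ r : Fin 4 → ℝ, ιV v = ∑ a : Fin 4, r a • vg e εn a := by
  have hv : v ∈ Submodule.span ℝ (Set.range (fb e εn)) := by rw [hspan]; trivial
  obtain ⟨r, hr⟩ := (mem_span_range_iff_exists_fun ℝ).1 hv
  refine ⟨r, ?_⟩
  rw [← hr, ιV]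
  have : ((0 : Fin 3 → ℝ), ∑ a : Fin 4, r a • fb e εn a)
      = ∑ a : Fin 4, r a • ((0 : Fin 3 → ℝ), fb e εn a) := by
    calc ((0 : Fin 3 → ℝ), ∑ a : Fin 4, r a • fb e εn a)
        = LinearMap.inr ℝ (Fin 3 → ℝ) V (∑ a : Fin 4, r a • fb e εn a) := rfl
    _ = _ := by rw [map_sum]; exact Finset.sum_congr rfl fun a _ => by rw [map_smul]; rfl
  rw [this, map_sum]
  exact Finset.sum_congr rfl fun a _ => by rw [map_smul]; rfl

lemma mon3_mem_span (e : (Fin 3 → ℝ) →ₗ[ℝ] V) (εn : V) (i j : Fin 3) (a : Fin 4) :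
    wg i * (wg j * vg e εn a) ∈
      span ℝ (Set.range fun p : Fin 3 × Fin 4 => mon21 e εn p.1 p.2) := by
  have hmem : ∀ m b, mon21 e εn m b ∈
      span ℝ (Set.range fun p : Fin 3 × Fin 4 => mon21 e εn p.1 p.2) :=
    fun m b => subset_span ⟨(m, b), rfl⟩
  fin_cases i <;> fin_cases j
  · rw [ww_self]; exact zero_mem _
  · exact hmem 2 a
  · rw [ww_swap]; exact neg_mem (hmem 1 a)
  · rw [ww_swap]; exact neg_mem (hmem 2 a)
  · rw [ww_self]; exact zero_mem _
  · exact hmem 0 a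
  · exact hmem 1 a
  · rw [ww_swap]; exact neg_mem (hmem 0 a)
  · rw [ww_self]; exact zero_mem _

lemma span21 (e : (Fin 3 → ℝ) →ₗ[ℝ] V) (εn : V)
    (hspan : Submodule.span ℝ (Set.range (fb e εn)) = ⊤) :
    ∀ k ∈ Omeg V 2 1, ∃ c : Fin 3 × Fin 4 → ℝ,
      k = ∑ p : Fin 3 × Fin 4, c p • mon21 e εn p.1 p.2 := by
  intro k hk
  have hle : Omeg V 2 1 ≤ span ℝ (Set.range fun p : Fin 3 × Fin 4 => mon21 e εn p.1 p.2) := by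
    rw [omeg21_eq]
    refine mul_le.2 fun x hx y hy => ?_
    obtain ⟨v, rfl⟩ := hy
    refine Submodule.mul_induction_on hx (fun m1 hm1 n1 hn1 => ?_) (fun a b ha hb => ?_)
    · obtain ⟨w1, rfl⟩ := hm1
      obtain ⟨w2, rfl⟩ := hn1
      obtain ⟨r, hr⟩ := ιV_expand e εn hspan v
      show ιW V w1 * ιW V w2 * ιV v ∈ _
      rw [mul_assoc, ιW_expand w1, ιW_expand w2, hr]
      simp only [Finset.sum_mul, Finset.mul_sum, smul_mul_assoc, mul_smul_comm]
      refine sum_mem fun b _ => smul_mem _ _ (sum_mem fun j _ => smul_mem _ _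
        (sum_mem fun i _ => smul_mem _ _ (mon3_mem_span e εn i j b)))
    · rw [add_mul]; exact add_mem ha hb
  obtain ⟨c, hc⟩ := (mem_span_range_iff_exists_fun ℝ).1 (hle hk)
  exact ⟨c, hc.symm⟩

lemma span11 (e : (Fin 3 → ℝ) →ₗ[ℝ] V) (εn : V)
    (hspan : Submodule.span ℝ (Set.range (fb e εn)) = ⊤) :
    ∀ k ∈ Omeg V 1 1, ∃ c : Fin 3 × Fin 4 → ℝ,
      k = ∑ p : Fin 3 × Fin 4, c p • mon11 e εn p.1 p.2 := by
  intro k hk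
  have hle : Omeg V 1 1 ≤ span ℝ (Set.range fun p : Fin 3 × Fin 4 => mon11 e εn p.1 p.2) := by
    rw [omeg11_eq]
    refine mul_le.2 fun x hx y hy => ?_
    obtain ⟨w, rfl⟩ := hx
    obtain ⟨v, rfl⟩ := hy
    obtain ⟨r, hr⟩ := ιV_expand e εn hspan v
    show ιW V w * ιV v ∈ _
    rw [ιW_expand w, hr]
    simp only [Finset.sum_mul, Finset.mul_sum, smul_mul_assoc, mul_smul_comm]
    refine sum_mem fun b _ => smul_mem _ _ (sum_mem fun i _ =>
      smul_mem _ _ (subset_span ⟨(i, b), rfl⟩))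
  obtain ⟨c, hc⟩ := (mem_span_range_iff_exists_fun ℝ).1 (hle hk)
  exact ⟨c, hc.symm⟩

end Stmt17

namespace Stmt17
variable {V : Type*} [AddCommGroup V] [Module ℝ V]
open ExteriorAlgebra Submodule

def pW (i : Fin 3) : ((Fin 3 → ℝ) × V) →ₗ[ℝ] ℝ :=
  (LinearMap.proj i).comp (LinearMap.fst ℝ (Fin 3 → ℝ) V)
def pV (B : Module.Basis (Fin 4) ℝ V) (a : Fin 4) : ((Fin 3 → ℝ) × V) →ₗ[ℝ] ℝ :=
  (B.coord a).comp (LinearMap.snd ℝ (Fin 3 → ℝ) V)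

def Ffun (n : ℕ) (ψ : Fin n → (((Fin 3 → ℝ) × V) →ₗ[ℝ] ℝ)) : BExt V →ₗ[ℝ] ℝ :=
  ExteriorAlgebra.liftAlternating
    (Function.update (fun i => (0 : ((Fin 3 → ℝ) × V) [⋀^Fin i]→ₗ[ℝ] ℝ)) n
      ((Matrix.detRowAlternating).compLinearMap (LinearMap.pi ψ)))

lemma Ffun_ιMulti (n : ℕ) (ψ : Fin n → (((Fin 3 → ℝ) × V) →ₗ[ℝ] ℝ))
    (v : Fin n → ((Fin 3 → ℝ) × V)) :
    Ffun n ψ (ιMulti ℝ n v) = Matrix.det (Matrix.of fun i j => ψ j (v i)) := by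
  rw [Ffun, liftAlternating_apply_ιMulti, Function.update_self]
  rfl

lemma mon5_eq_ιMulti (e : (Fin 3 → ℝ) →ₗ[ℝ] V) (εn : V) (x y : Fin 4) :
    mon5 e εn x y = ιMulti ℝ 5
      ![((Pi.single 0 1 : Fin 3 → ℝ), (0:V)), (Pi.single 1 1, 0), (Pi.single 2 1, 0),
        (0, fb e εn x), (0, fb e εn y)] := by
  simp [mon5, wg, vg, ιW, ιV, ExteriorAlgebra.ιMulti_apply, List.ofFn_succ, mul_assoc]

lemma mon4_eq_ιMulti (e : (Fin 3 → ℝ) →ₗ[ℝ] V) (εn : V) (i j : Fin 3) (a b : Fin 4) :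
    mon4 e εn i j a b = ιMulti ℝ 4
      ![((Pi.single i 1 : Fin 3 → ℝ), (0:V)), (Pi.single j 1, 0),
        (0, fb e εn a), (0, fb e εn b)] := by
  simp [mon4, wg, vg, ιW, ιV, ExteriorAlgebra.ιMulti_apply, List.ofFn_succ, mul_assoc]

end Stmt17

namespace Stmt17
variable {V : Type*} [AddCommGroup V] [Module ℝ V]
open ExteriorAlgebra Submodule

lemma pW_single (p i : Fin 3) : pW (V := V) p ((Pi.single i 1 : Fin 3 → ℝ), (0:V)) =
    if p = i then 1 else 0 := by
  simp [pW, Pi.single_apply]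
lemma pW_v (p : Fin 3) (v : V) : pW (V := V) p ((0 : Fin 3 → ℝ), v) = 0 := by
  simp [pW]
lemma pV_single (B : Module.Basis (Fin 4) ℝ V) (x : Fin 4) (w : Fin 3 → ℝ) :
    pV B x (w, (0:V)) = 0 := by
  simp [pV]
lemma pV_basis (B : Module.Basis (Fin 4) ℝ V) (x b : Fin 4) :
    pV B x ((0 : Fin 3 → ℝ), B b) = if x = b then 1 else 0 := by
  simp [pV, Module.Basis.repr_self, Finsupp.single_apply, eq_comm]

lemma eval5 (e : (Fin 3 → ℝ) →ₗ[ℝ] V) (εn : V) (B : Module.Basis (Fin 4) ℝ V)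
    (hB : ∀ b, B b = fb e εn b) (x y a b : Fin 4) :
    Ffun 5 ![pW 0, pW 1, pW 2, pV B x, pV B y] (mon5 e εn a b) =
      (if x = a then (1:ℝ) else 0) * (if y = b then 1 else 0) -
      (if x = b then 1 else 0) * (if y = a then 1 else 0) := by
  rw [mon5_eq_ιMulti, Ffun_ιMulti]
  simp only [← hB]
  simp [Matrix.det_succ_row_zero, Fin.sum_univ_succ, Fin.succAbove,
    pW_single, pW_v, pV_single, pV_basis]
  split_ifs <;> ring

lemma eval4 (e : (Fin 3 → ℝ) →ₗ[ℝ] V) (εn : V) (B : Module.Basis (Fin 4) ℝ V)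
    (hB : ∀ b, B b = fb e εn b) (p q : Fin 3) (x y : Fin 4) (i j : Fin 3) (a b : Fin 4) :
    Ffun 4 ![pW p, pW q, pV B x, pV B y] (mon4 e εn i j a b) =
      ((if p = i then (1:ℝ) else 0) * (if q = j then 1 else 0) -
       (if p = j then 1 else 0) * (if q = i then 1 else 0)) *
      ((if x = a then (1:ℝ) else 0) * (if y = b then 1 else 0) -
       (if x = b then 1 else 0) * (if y = a then 1 else 0)) := by
  rw [mon4_eq_ιMulti, Ffun_ιMulti]
  simp only [← hB]
  simp [Matrix.det_succ_row_zero, Fin.sum_univ_succ, Fin.succAbove,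
    pW_single, pW_v, pV_single, pV_basis]
  split_ifs <;> ring

end Stmt17

namespace Stmt17
variable {V : Type*} [AddCommGroup V] [Module ℝ V]
open ExteriorAlgebra Submodule

lemma cs0 : Fin.castSucc (0 : Fin 3) = (0 : Fin 4) := rfl
lemma cs1 : Fin.castSucc (1 : Fin 3) = (1 : Fin 4) := rfl
lemma cs2 : Fin.castSucc (2 : Fin 3) = (2 : Fin 4) := rfl

variable (e : (Fin 3 → ℝ) →ₗ[ℝ] V) (εn : V)

lemma vg_sq (x : Fin 4) : vg e εn x * vg e εn x = 0 := ExteriorAlgebra.ι_sq_zero _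
lemma vgvg (a b : Fin 4) : vg e εn a * vg e εn b = -(vg e εn b * vg e εn a) :=
  eq_neg_of_add_eq_zero_left (ExteriorAlgebra.ι_add_mul_swap _ _)

lemma mon5_swap (x y : Fin 4) : mon5 e εn y x = -mon5 e εn x y := by
  unfold mon5; rw [vgvg]; simp only [mul_neg]
lemma mon5_diag (x : Fin 4) : mon5 e εn x x = 0 := by
  unfold mon5; rw [vg_sq]; simp only [mul_zero]
lemma mon4_vswap (i j : Fin 3) (a b : Fin 4) : mon4 e εn i j b a = -mon4 e εn i j a b := by
  unfold mon4; rw [vgvg]; simp only [mul_neg]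
lemma mon4_vdiag (i j : Fin 3) (a : Fin 4) : mon4 e εn i j a a = 0 := by
  unfold mon4; rw [vg_sq]; simp only [mul_zero]
lemma mon4_v3 (i j : Fin 3) (x : Fin 3) :
    mon4 e εn i j x.castSucc 3 = -mon4 e εn i j 3 x.castSucc := mon4_vswap e εn i j 3 _
lemma mon4_wswap (i j : Fin 3) (a b : Fin 4) : mon4 e εn j i a b = -mon4 e εn i j a b := by
  unfold mon4; rw [ww_swap]
lemma mon4_wdiag (i : Fin 3) (a b : Fin 4) : mon4 e εn i i a b = 0 := by
  unfold mon4; rw [ww_self]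
lemma mon4_w10 (a b : Fin 4) : mon4 e εn 1 0 a b = -mon4 e εn 0 1 a b := mon4_wswap e εn 0 1 a b
lemma mon4_w20 (a b : Fin 4) : mon4 e εn 2 0 a b = -mon4 e εn 0 2 a b := mon4_wswap e εn 0 2 a b
lemma mon4_w21 (a b : Fin 4) : mon4 e εn 2 1 a b = -mon4 e εn 1 2 a b := mon4_wswap e εn 1 2 a b

lemma rel2m (m : Fin 3) (a : Fin 4) :
    ιV εn * mon21 e εn m a = mon4 e εn (m+1) (m+2) 3 a := rel2 e εn m a

lemma rel3m (i : Fin 3) (b : Fin 4) :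
    Eelt e * mon11 e εn i b = -∑ q : Fin 3, mon4 e εn q i q.castSucc b := rel3 e εn i b

end Stmt17

namespace Stmt17
variable {V : Type*} [AddCommGroup V] [Module ℝ V]
open ExteriorAlgebra Submodule

lemma exists_dec (e : (Fin 3 → ℝ) →ₗ[ℝ] V) (εn : V)
    (hspan' : Submodule.span ℝ (Set.range (fb e εn)) = ⊤)
    (k : BExt V) (hk : k ∈ Omeg V 2 1) :
    ∃ ck rk ak : BExt V, ck + rk = k ∧ ck ∈ Omeg V 2 1 ∧ rk ∈ Omeg V 2 1 ∧
      Eelt e * rk = 0 ∧ ak ∈ Omeg V 1 1 ∧ ιV εn * ck = Eelt e * ak := by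
  obtain ⟨c, hc⟩ := span21 e εn hspan' k hk
  refine ⟨(∑ m : Fin 3, ∑ a : Fin 3,
      ((c (m, a.castSucc) - c (a, m.castSucc))/2) • mon21 e εn m a.castSucc) +
      ∑ m : Fin 3, c (m, 3) • mon21 e εn m 3,
    ∑ m : Fin 3, ∑ a : Fin 3,
      ((c (m, a.castSucc) + c (a, m.castSucc))/2) • mon21 e εn m a.castSucc,
    ∑ m : Fin 3, ((c (m+1, (m+2 : Fin 3).castSucc) - c (m+2, (m+1 : Fin 3).castSucc))/2) •
      mon11 e εn m 3, ?_, ?_, ?_, ?_, ?_, ?_⟩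
  · rw [hc]
    simp only [Fintype.sum_prod_type, Fin.sum_univ_three, Fin.sum_univ_four, cs0, cs1, cs2,
      Fin.reduceAdd]
    module
  · exact add_mem (sum_mem fun m _ => sum_mem fun a _ => smul_mem _ _ (mon21_mem e εn _ _))
      (sum_mem fun m _ => smul_mem _ _ (mon21_mem e εn _ _))
  · exact sum_mem fun m _ => sum_mem fun a _ => smul_mem _ _ (mon21_mem e εn _ _)
  · rw [Finset.mul_sum]
    simp only [Finset.mul_sum, mul_smul_comm, rel1]
    simp only [Fin.sum_univ_three, cs0, cs1, cs2]
    simp only [mon5_diag, mon5_swap e εn 0 1, mon5_swap e εn 0 2, mon5_swap e εn 1 2]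
    module
  · exact sum_mem fun m _ => smul_mem _ _ (mon11_mem e εn _ _)
  · rw [mul_add, Finset.mul_sum, Finset.mul_sum, Finset.mul_sum]
    simp only [Finset.mul_sum, mul_smul_comm, rel2m, rel3m]
    simp only [mon4_vdiag, smul_zero, Finset.sum_const_zero, add_zero]
    simp only [mon4_v3, Fin.sum_univ_three, Fin.reduceAdd, cs0, cs1, cs2]
    simp only [mon4_wdiag, mon4_w10 e εn, mon4_w20 e εn, mon4_w21 e εn]
    module

end Stmt17

namespace Stmt17
variable {V : Type*} [AddCommGroup V] [Module ℝ V]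
open ExteriorAlgebra Submodule

lemma key (e : (Fin 3 → ℝ) →ₗ[ℝ] V) (εn : V)
    (hindep : LinearIndependent ℝ (fb e εn))
    (hspan' : Submodule.span ℝ (Set.range (fb e εn)) = ⊤)
    (d : BExt V) (hd : d ∈ Omeg V 2 1) (h1 : Eelt e * d = 0)
    (A : BExt V) (hA : A ∈ Omeg V 1 1) (hEq : ιV εn * d = Eelt e * A) : d = 0 := by
  set B : Module.Basis (Fin 4) ℝ V := Module.Basis.mk hindep (le_of_eq hspan'.symm) with hBdef
  have hB : ∀ b, B b = fb e εn b := fun b => Module.Basis.mk_apply _ _ b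
  obtain ⟨c, hc⟩ := span21 e εn hspan' d hd
  obtain ⟨β, hβ⟩ := span11 e εn hspan' A hA
  rw [hc, Finset.mul_sum] at h1
  simp only [mul_smul_comm, rel1] at h1
  rw [hc, hβ, Finset.mul_sum, Finset.mul_sum] at hEq
  simp only [mul_smul_comm, rel2m, rel3m, smul_neg] at hEq
  have F03 := congrArg (Ffun 5 ![pW 0, pW 1, pW 2, pV B 0, pV B 3]) h1
  simp only [map_sum, map_smul, map_zero, eval5 e εn B hB] at F03
  simp [Fintype.sum_prod_type, Fin.sum_univ_three, Fin.sum_univ_four, cs0, cs1, cs2] at F03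
  have F13 := congrArg (Ffun 5 ![pW 0, pW 1, pW 2, pV B 1, pV B 3]) h1
  simp only [map_sum, map_smul, map_zero, eval5 e εn B hB] at F13
  simp [Fintype.sum_prod_type, Fin.sum_univ_three, Fin.sum_univ_four, cs0, cs1, cs2] at F13
  have F23 := congrArg (Ffun 5 ![pW 0, pW 1, pW 2, pV B 2, pV B 3]) h1
  simp only [map_sum, map_smul, map_zero, eval5 e εn B hB] at F23
  simp [Fintype.sum_prod_type, Fin.sum_univ_three, Fin.sum_univ_four, cs0, cs1, cs2] at F23
  have F01 := congrArg (Ffun 5 ![pW 0, pW 1, pW 2, pV B 0, pV B 1]) h1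
  simp only [map_sum, map_smul, map_zero, eval5 e εn B hB] at F01
  simp [Fintype.sum_prod_type, Fin.sum_univ_three, Fin.sum_univ_four, cs0, cs1, cs2] at F01
  have F02 := congrArg (Ffun 5 ![pW 0, pW 1, pW 2, pV B 0, pV B 2]) h1
  simp only [map_sum, map_smul, map_zero, eval5 e εn B hB] at F02
  simp [Fintype.sum_prod_type, Fin.sum_univ_three, Fin.sum_univ_four, cs0, cs1, cs2] at F02
  have F12 := congrArg (Ffun 5 ![pW 0, pW 1, pW 2, pV B 1, pV B 2]) h1
  simp only [map_sum, map_smul, map_zero, eval5 e εn B hB] at F12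
  simp [Fintype.sum_prod_type, Fin.sum_univ_three, Fin.sum_univ_four, cs0, cs1, cs2] at F12
  have G00 := congrArg (Ffun 4 ![pW 1, pW 2, pV B 0, pV B 3]) hEq
  simp only [map_sum, map_smul, map_neg, eval4 e εn B hB] at G00
  simp [Fintype.sum_prod_type, Fin.sum_univ_three, Fin.sum_univ_four, cs0, cs1, cs2] at G00
  have G01 := congrArg (Ffun 4 ![pW 1, pW 2, pV B 1, pV B 3]) hEq
  simp only [map_sum, map_smul, map_neg, eval4 e εn B hB] at G01
  simp [Fintype.sum_prod_type, Fin.sum_univ_three, Fin.sum_univ_four, cs0, cs1, cs2] at G01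
  have G02 := congrArg (Ffun 4 ![pW 1, pW 2, pV B 2, pV B 3]) hEq
  simp only [map_sum, map_smul, map_neg, eval4 e εn B hB] at G02
  simp [Fintype.sum_prod_type, Fin.sum_univ_three, Fin.sum_univ_four, cs0, cs1, cs2] at G02
  have G11 := congrArg (Ffun 4 ![pW 2, pW 0, pV B 1, pV B 3]) hEq
  simp only [map_sum, map_smul, map_neg, eval4 e εn B hB] at G11
  simp [Fintype.sum_prod_type, Fin.sum_univ_three, Fin.sum_univ_four, cs0, cs1, cs2] at G11
  have G12 := congrArg (Ffun 4 ![pW 2, pW 0, pV B 2, pV B 3]) hEq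
  simp only [map_sum, map_smul, map_neg, eval4 e εn B hB] at G12
  simp [Fintype.sum_prod_type, Fin.sum_univ_three, Fin.sum_univ_four, cs0, cs1, cs2] at G12
  have G10 := congrArg (Ffun 4 ![pW 2, pW 0, pV B 0, pV B 3]) hEq
  simp only [map_sum, map_smul, map_neg, eval4 e εn B hB] at G10
  simp [Fintype.sum_prod_type, Fin.sum_univ_three, Fin.sum_univ_four, cs0, cs1, cs2] at G10
  have G22 := congrArg (Ffun 4 ![pW 0, pW 1, pV B 2, pV B 3]) hEq
  simp only [map_sum, map_smul, map_neg, eval4 e εn B hB] at G22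
  simp [Fintype.sum_prod_type, Fin.sum_univ_three, Fin.sum_univ_four, cs0, cs1, cs2] at G22
  have G20 := congrArg (Ffun 4 ![pW 0, pW 1, pV B 0, pV B 3]) hEq
  simp only [map_sum, map_smul, map_neg, eval4 e εn B hB] at G20
  simp [Fintype.sum_prod_type, Fin.sum_univ_three, Fin.sum_univ_four, cs0, cs1, cs2] at G20
  have G21 := congrArg (Ffun 4 ![pW 0, pW 1, pV B 1, pV B 3]) hEq
  simp only [map_sum, map_smul, map_neg, eval4 e εn B hB] at G21
  simp [Fintype.sum_prod_type, Fin.sum_univ_three, Fin.sum_univ_four, cs0, cs1, cs2] at G21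
  have h00 : c (0, 0) = 0 := G00
  have h11 : c (1, 1) = 0 := G11
  have h22 : c (2, 2) = 0 := G22
  have h01 : c (0, 1) = 0 := by linarith
  have h10 : c (1, 0) = 0 := by linarith
  have h02 : c (0, 2) = 0 := by linarith
  have h20 : c (2, 0) = 0 := by linarith
  have h12 : c (1, 2) = 0 := by linarith
  have h21 : c (2, 1) = 0 := by linarith
  rw [hc]
  simp only [Fintype.sum_prod_type, Fin.sum_univ_three, Fin.sum_univ_four]
  rw [h00, h01, h02, h10, h11, h12, h20, h21, h22, F03, F13, F23]
  simp

end Stmt17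

open Stmt17

/-- **unique fixing of the representative `ǩ`.** Let `V` be 4-dimensional,
`e : ℝ³ → V` injective with nondegenerate boundary metric (the pullback of the Lorentzian
metric `η`), and `ε_n` completing to a basis.  For every `k̃ ∈ Λ²(ℝ³)* ⊗ V` there is a
unique decomposition `k̃ = ǩ + r` with `r ∈ Ker(W_e^{∂(2,1)})` (i.e. `e ∧ r = 0`) and
`ε_n ∧ ǩ ∈ Im(W_e^{∂(1,1)})`.  Moreover `ǩ` depends only on the class of `k̃` in
`(Λ²(ℝ³)* ⊗ V)/Ker(W_e^{∂(2,1)})`. -/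
theorem fixing_representative_k
    {V : Type*} [AddCommGroup V] [Module ℝ V]
    (hV : Module.finrank ℝ V = 4)
    (e : (Fin 3 → ℝ) →ₗ[ℝ] V) (εn : V)
    (hindep : LinearIndependent ℝ
      (Fin.snoc (fun i : Fin 3 => e (Pi.single i 1)) εn : Fin 4 → V))
    (hspan : Submodule.span ℝ
      (Set.range (Fin.snoc (fun i : Fin 3 => e (Pi.single i 1)) εn : Fin 4 → V)) = ⊤)
    (η : V →ₗ[ℝ] V →ₗ[ℝ] ℝ)
    (hsymm : ∀ v w : V, η v w = η w v)
    (hnondeg : ∀ v : V, (∀ w : V, η v w = 0) → v = 0)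
    (hpull : ∀ w : Fin 3 → ℝ, (∀ w' : Fin 3 → ℝ, η (e w) (e w') = 0) → w = 0) :
    -- existence and uniqueness of the decomposition
    (∀ k ∈ Omeg V 2 1,
      ∃! p : BExt V × BExt V,
        p.1 + p.2 = k ∧ p.1 ∈ Omeg V 2 1 ∧
          (p.2 ∈ Omeg V 2 1 ∧ Eelt e * p.2 = 0) ∧
          ∃ a ∈ Omeg V 1 1, ιV εn * p.1 = Eelt e * a)
    -- `ǩ` depends only on the class of `k̃` modulo `Ker(W_e^{∂(2,1)})`
    ∧ (∀ k₁ k₂ c₁ r₁ c₂ r₂ : BExt V,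
        k₁ ∈ Omeg V 2 1 → k₂ ∈ Omeg V 2 1 →
        Eelt e * (k₁ - k₂) = 0 →
        (c₁ + r₁ = k₁ ∧ c₁ ∈ Omeg V 2 1 ∧ r₁ ∈ Omeg V 2 1 ∧ Eelt e * r₁ = 0 ∧
          ∃ a ∈ Omeg V 1 1, ιV εn * c₁ = Eelt e * a) →
        (c₂ + r₂ = k₂ ∧ c₂ ∈ Omeg V 2 1 ∧ r₂ ∈ Omeg V 2 1 ∧ Eelt e * r₂ = 0 ∧
          ∃ a ∈ Omeg V 1 1, ιV εn * c₂ = Eelt e * a) →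
        c₁ = c₂) := by
  have hind' : LinearIndependent ℝ (fb e εn) := hindep
  have hspan' : Submodule.span ℝ (Set.range (fb e εn)) = ⊤ := hspan
  constructor
  · intro k hk
    obtain ⟨ck, rk, ak, hsum, hckm, hrkm, hrE, hakm, hakEq⟩ := exists_dec e εn hspan' k hk
    refine ⟨(ck, rk), ⟨hsum, hckm, ⟨hrkm, hrE⟩, ak, hakm, hakEq⟩, ?_⟩
    rintro ⟨c₂, r₂⟩ ⟨hsum₂, hc₂m, ⟨hr₂m, hr₂E⟩, a₂, ha₂m, ha₂Eq⟩
    have hdiff : c₂ - ck = rk - r₂ := by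
      rw [sub_eq_sub_iff_add_eq_add, hsum₂, ← hsum]; exact add_comm _ _
    have hE : Eelt e * (c₂ - ck) = 0 := by
      rw [hdiff, mul_sub, hrE, hr₂E, sub_zero]
    have hv : ιV εn * (c₂ - ck) = Eelt e * (a₂ - ak) := by
      rw [mul_sub, ha₂Eq, hakEq, ← mul_sub]
    have h0 := key e εn hind' hspan' _ (sub_mem hc₂m hckm) hE (a₂ - ak)
      (sub_mem ha₂m hakm) hv
    have hc2 : c₂ = ck := sub_eq_zero.mp h0
    have hr2 : r₂ = rk := by
      have h := hsum₂.trans hsum.symm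
      rw [hc2] at h
      exact add_left_cancel h
    exact Prod.ext hc2 hr2
  · intro k₁ k₂ c₁ r₁ c₂ r₂ hk₁ hk₂ hker hdec₁ hdec₂
    obtain ⟨hs₁, hc₁m, hr₁m, hr₁E, a₁, ha₁m, ha₁Eq⟩ := hdec₁
    obtain ⟨hs₂, hc₂m, hr₂m, hr₂E, a₂, ha₂m, ha₂Eq⟩ := hdec₂
    have h : c₁ - c₂ = (k₁ - k₂) + (r₂ - r₁) := by rw [← hs₁, ← hs₂]; abel
    have hE : Eelt e * (c₁ - c₂) = 0 := by
      rw [h, mul_add, hker, mul_sub, hr₂E, hr₁E, sub_zero, add_zero]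
    have hv : ιV εn * (c₁ - c₂) = Eelt e * (a₁ - a₂) := by
      rw [mul_sub, ha₁Eq, ha₂Eq, ← mul_sub]
    exact sub_eq_zero.mp (key e εn hind' hspan' _ (sub_mem hc₁m hc₂m) hE (a₁ - a₂)
      (sub_mem ha₁m ha₂m) hv)
end
end
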